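/- arXiv:hep-th/0605011 — 12 statements merged into one kernel-verified Lean document; each statement's English description precedes it below -/
import Mathlib

section
/- Define φ(a₀,a₁,a₂,a₃) = τ(a₀ [D,a₁] D⁻¹ [D,a₂] D⁻¹ [D,a₃] D⁻¹) and τ₀(a₀,a₁,a₂,a₃,a₄) = τ(a₀ [D,a₁] D⁻¹ [D,a₂] D⁻¹ [D,a₃] D⁻¹ [D,a₄] D⁻¹) for elements of B. Then φ satisfies the Hochschild coboundary identity b φ = −τ₀, i.e. for all a₀,a₁,a₂,a₃,a₄ ∈ B: φ(a₀a₁,a₂,a₃,a₄) − φ(a₀,a₁a₂,a₃,a₄) + φ(a₀,a₁,a₂a₃,a₄) − φ(a₀,a₁,a₂,a₃a₄) + φ(a₄a₀,a₁,a₂,a₃) = −τ₀(a₀,a₁,a₂,a₃,a₄). -/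
set_option maxHeartbeats 2000000 in
/-- `b φ = -τ₀` where
`φ(a₀,a₁,a₂,a₃) = τ(a₀ [D,a₁] D⁻¹ [D,a₂] D⁻¹ [D,a₃] D⁻¹)` and
`τ₀(a₀,a₁,a₂,a₃,a₄) = τ(a₀ [D,a₁] D⁻¹ [D,a₂] D⁻¹ [D,a₃] D⁻¹ [D,a₄] D⁻¹)`. -/
theorem stmt0 {B : Type*} [Ring B] [Algebra ℂ B]
    (τ : B →ₗ[ℂ] ℂ) (htr : ∀ x y : B, τ (x * y) = τ (y * x))
    (D Dinv : B) (hD : D * Dinv = 1) (hDinv : Dinv * D = 1)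
    (φ : B → B → B → B → ℂ)
    (hφ : ∀ a0 a1 a2 a3 : B, φ a0 a1 a2 a3 =
      τ (a0 * (D * a1 - a1 * D) * Dinv * (D * a2 - a2 * D) * Dinv *
        (D * a3 - a3 * D) * Dinv))
    (τ0 : B → B → B → B → B → ℂ)
    (hτ0 : ∀ a0 a1 a2 a3 a4 : B, τ0 a0 a1 a2 a3 a4 =
      τ (a0 * (D * a1 - a1 * D) * Dinv * (D * a2 - a2 * D) * Dinv *
        (D * a3 - a3 * D) * Dinv * (D * a4 - a4 * D) * Dinv)) :
    ∀ a0 a1 a2 a3 a4 : B,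
      φ (a0 * a1) a2 a3 a4 - φ a0 (a1 * a2) a3 a4 + φ a0 a1 (a2 * a3) a4
        - φ a0 a1 a2 (a3 * a4) + φ (a4 * a0) a1 a2 a3
        = - τ0 a0 a1 a2 a3 a4 := by
  intro a0 a1 a2 a3 a4
  have hD' : ∀ x : B, D * (Dinv * x) = x := fun x => by
    rw [← mul_assoc, hD, one_mul]
  have hDinv' : ∀ x : B, Dinv * (D * x) = x := fun x => by
    rw [← mul_assoc, hDinv, one_mul]
  have h5 : φ (a4 * a0) a1 a2 a3 =
      τ ((a0 * (D * a1 - a1 * D) * Dinv * (D * a2 - a2 * D) * Dinv *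
        (D * a3 - a3 * D) * Dinv) * a4) := by
    rw [hφ, show a4 * a0 * (D * a1 - a1 * D) * Dinv * (D * a2 - a2 * D) * Dinv *
        (D * a3 - a3 * D) * Dinv = a4 * (a0 * (D * a1 - a1 * D) * Dinv *
        (D * a2 - a2 * D) * Dinv * (D * a3 - a3 * D) * Dinv) by
      simp only [mul_assoc], htr]
  rw [hφ, hφ, hφ, hφ, h5, hτ0, ← map_neg, ← map_sub, ← map_add, ← map_sub, ← map_add]
  congr 1
  simp only [mul_sub, sub_mul, mul_add, add_mul, mul_assoc, hD', hDinv', hD, hDinv, mul_one, one_mul,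
    neg_sub]
  abel
end

section
/- Let (a_i)_{i∈I} and (b_i)_{i∈I} be finite families of elements of A and set 𝔸 = Σ_{i∈I} a_i [D,b_i] ∈ B. Then τ(𝔸 D⁻¹ 𝔸 D⁻¹) = − Σ_{i∈I} Σ_{j∈I} τ(a_i [D,b_i] D⁻¹ [D,a_j] D⁻¹ [D,b_j] D⁻¹). (This is Lemma 3.2: ∫− A D⁻¹ A D⁻¹ = −∫_φ A dA, written out on a finite presentation of the one-form A.) -/
/-- for finite families `(aᵢ), (bᵢ)` in `A` and `𝔸 = Σᵢ aᵢ [D,bᵢ]`,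
`τ(𝔸 D⁻¹ 𝔸 D⁻¹) = - Σᵢ Σⱼ τ(aᵢ [D,bᵢ] D⁻¹ [D,aⱼ] D⁻¹ [D,bⱼ] D⁻¹)`. -/
theorem stmt2 {B : Type*} [Ring B] [Algebra ℂ B]
    (τ : B →ₗ[ℂ] ℂ) (htr : ∀ x y : B, τ (x * y) = τ (y * x))
    (D Dinv : B) (hD : D * Dinv = 1) (hDinv : Dinv * D = 1)
    (A : Subalgebra ℂ B)
    (htad : ∀ a ∈ A, ∀ b ∈ A, τ (a * (D * b - b * D) * Dinv) = 0)
    {I : Type*} [Fintype I] (a b : I → B)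
    (ha : ∀ i, a i ∈ A) (hb : ∀ i, b i ∈ A) :
    τ ((∑ i, a i * (D * b i - b i * D)) * Dinv *
        (∑ i, a i * (D * b i - b i * D)) * Dinv) =
      - ∑ i, ∑ j,
        τ (a i * (D * b i - b i * D) * Dinv * (D * a j - a j * D) * Dinv *
            (D * b j - b j * D) * Dinv) := by
  -- key auxiliary: τ(x [D,y] z D⁻¹) = 0 for x,y,z ∈ A
  have key : ∀ x ∈ A, ∀ y ∈ A, ∀ z ∈ A,
      τ (x * (D * y - y * D) * z * Dinv) = 0 := by
    intro x hx y hy z hz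
    have h1 : x * (D * y - y * D) * z * Dinv
        = x * (D * (y * z) - (y * z) * D) * Dinv
          - (x * y) * (D * z - z * D) * Dinv := by noncomm_ring
    rw [h1, map_sub, htad x hx (y * z) (A.mul_mem hy hz),
        htad (x * y) (A.mul_mem hx hy) z hz, sub_zero]
  -- D⁻¹ [D,c] D⁻¹ = c D⁻¹ - D⁻¹ c
  have hDa : ∀ c : B, Dinv * (D * c - c * D) * Dinv = c * Dinv - Dinv * c := by
    intro c
    calc Dinv * (D * c - c * D) * Dinv
        = Dinv * D * (c * Dinv) - Dinv * c * (D * Dinv) := by noncomm_ring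
      _ = c * Dinv - Dinv * c := by rw [hDinv, hD, one_mul, mul_one]
  -- the per-pair identity
  have pair : ∀ i j : I,
      τ (a i * (D * b i - b i * D) * Dinv * (a j * (D * b j - b j * D)) * Dinv)
        = - τ (a i * (D * b i - b i * D) * Dinv * (D * a j - a j * D) * Dinv *
            (D * b j - b j * D) * Dinv) := by
    intro i j
    set wi := a i * (D * b i - b i * D) with hwi
    set cj := D * b j - b j * D with hcj
    -- vanishing of the "straightened" term
    have hz : τ (wi * a j * Dinv * cj * Dinv) = 0 := by
      have e : wi * a j * Dinv * cj * Dinv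
          = wi * a j * (Dinv * cj * Dinv) := by noncomm_ring
      rw [e, hDa (b j)]
      have e2 : wi * a j * (b j * Dinv - Dinv * b j)
          = a i * (D * b i - b i * D) * (a j * b j) * Dinv
            - wi * a j * Dinv * b j := by rw [hwi]; noncomm_ring
      rw [e2, map_sub, key (a i) (ha i) (b i) (hb i) (a j * b j)
            (A.mul_mem (ha j) (hb j)), htr]
      have e3 : b j * (wi * a j * Dinv)
          = (b j * a i) * (D * b i - b i * D) * (a j) * Dinv := by
        rw [hwi]; noncomm_ring
      rw [e3, key (b j * a i) (A.mul_mem (hb j) (ha i)) (b i) (hb i) (a j) (ha j),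
        zero_sub, neg_zero]
    -- main algebraic decomposition
    have e4 : wi * Dinv * (D * a j - a j * D) * Dinv * cj * Dinv
        = wi * (Dinv * (D * a j - a j * D) * Dinv) * (cj * Dinv) := by noncomm_ring
    have e5 : wi * Dinv * (a j * cj) * Dinv
        = wi * a j * Dinv * cj * Dinv
          - wi * (a j * Dinv - Dinv * a j) * (cj * Dinv) := by noncomm_ring
    have : τ (wi * Dinv * (a j * cj) * Dinv)
        = - τ (wi * Dinv * (D * a j - a j * D) * Dinv * cj * Dinv) := by
      rw [e5, map_sub, hz, zero_sub, e4, hDa (a j)]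
    exact this
  -- expand the sums
  simp only [Finset.sum_mul, Finset.mul_sum, map_sum]
  rw [Finset.sum_comm, ← Finset.sum_neg_distrib]
  refine Finset.sum_congr rfl fun i _ => ?_
  rw [← Finset.sum_neg_distrib]
  refine Finset.sum_congr rfl fun j _ => ?_
  exact pair i j
end

section
/- For all a₀, a₁, a₂, a₃ ∈ A one has τ((α(a₀) + a₀)(α(a₁) − a₁)(α(a₂) − a₂)(α(a₃) − a₃)) = τ(α(a₀) a₁ α(a₂) a₃) − τ(a₀ α(a₁) a₂ α(a₃)). (This is the simplification, in Theorem 3.3(1), of the cyclic 3-cocycle ψ = φ + ½B₀τ₀ to the form ψ(a₀,a₁,a₂,a₃) = ½ ∫− (α(a₀) a₁ α(a₂) a₃ − a₀ α(a₁) a₂ α(a₃)).) -/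
/-- under the vanishing tadpole hypothesis, with `α(x) = D x D⁻¹`,
for all `a₀,a₁,a₂,a₃ ∈ A`:
`τ((α(a₀)+a₀)(α(a₁)-a₁)(α(a₂)-a₂)(α(a₃)-a₃)) = τ(α(a₀) a₁ α(a₂) a₃) - τ(a₀ α(a₁) a₂ α(a₃))`. -/
theorem stmt3 {B : Type*} [Ring B] [Algebra ℂ B]
    (τ : B →ₗ[ℂ] ℂ) (htr : ∀ x y : B, τ (x * y) = τ (y * x))
    (D Dinv : B) (hD : D * Dinv = 1) (hDinv : Dinv * D = 1)
    (A : Subalgebra ℂ B)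
    (htad : ∀ a ∈ A, ∀ b ∈ A, τ (a * (D * b - b * D) * Dinv) = 0) :
    ∀ a0 ∈ A, ∀ a1 ∈ A, ∀ a2 ∈ A, ∀ a3 ∈ A,
      τ ((D * a0 * Dinv + a0) * (D * a1 * Dinv - a1) * (D * a2 * Dinv - a2) *
          (D * a3 * Dinv - a3)) =
        τ (D * a0 * Dinv * a1 * (D * a2 * Dinv) * a3) -
          τ (a0 * (D * a1 * Dinv) * a2 * (D * a3 * Dinv)) := by
  intro a0 ha0 a1 ha1 a2 ha2 a3 ha3
  have hmul : ∀ x y : B, D * x * Dinv * (D * y * Dinv) = D * (x * y) * Dinv := by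
    intro x y
    rw [show D * x * Dinv * (D * y * Dinv) = D * x * (Dinv * D) * (y * Dinv) by noncomm_ring,
        hDinv, mul_one]
    noncomm_ring
  have halpha : ∀ x : B, τ (D * x * Dinv) = τ x := by
    intro x
    rw [htr, ← mul_assoc, hDinv, one_mul]
  have hL : ∀ u ∈ A, ∀ v ∈ A, τ (D * u * Dinv * v) = τ (u * v) := by
    intro u hu v hv
    have h0 := htad v hv u hu
    rw [show v * (D * u - u * D) * Dinv = v * (D * u * Dinv) - v * u * (D * Dinv) by noncomm_ring,
        hD, mul_one, map_sub, sub_eq_zero] at h0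
    rw [htr, h0, htr]
  have expand : (D * a0 * Dinv + a0) * (D * a1 * Dinv - a1) * (D * a2 * Dinv - a2) *
      (D * a3 * Dinv - a3) =
        - a0 * a1 * a2 * a3
        + a0 * a1 * a2 * (D * a3 * Dinv)
        + a0 * a1 * (D * a2 * Dinv) * a3
        - a0 * a1 * (D * a2 * Dinv) * (D * a3 * Dinv)
        + a0 * (D * a1 * Dinv) * a2 * a3
        - a0 * (D * a1 * Dinv) * a2 * (D * a3 * Dinv)
        - a0 * (D * a1 * Dinv) * (D * a2 * Dinv) * a3
        + a0 * (D * a1 * Dinv) * (D * a2 * Dinv) * (D * a3 * Dinv)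
        - D * a0 * Dinv * a1 * a2 * a3
        + D * a0 * Dinv * a1 * a2 * (D * a3 * Dinv)
        + D * a0 * Dinv * a1 * (D * a2 * Dinv) * a3
        - D * a0 * Dinv * a1 * (D * a2 * Dinv) * (D * a3 * Dinv)
        + D * a0 * Dinv * (D * a1 * Dinv) * a2 * a3
        - D * a0 * Dinv * (D * a1 * Dinv) * a2 * (D * a3 * Dinv)
        - D * a0 * Dinv * (D * a1 * Dinv) * (D * a2 * Dinv) * a3
        + D * a0 * Dinv * (D * a1 * Dinv) * (D * a2 * Dinv) * (D * a3 * Dinv) := by noncomm_ring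
  rw [expand]
  simp only [neg_mul, map_neg, map_add, map_sub]
  have e0001 : τ (a0 * a1 * a2 * (D * a3 * Dinv)) = τ (a0 * a1 * a2 * a3) := by
    rw [show (a0 * a1 * a2 * (D * a3 * Dinv) : B) = (a0 * a1 * a2) * (D * a3 * Dinv) by noncomm_ring, htr,
        show (D * a3 * Dinv) * (a0 * a1 * a2) = D * a3 * Dinv * (a0 * a1 * a2) by noncomm_ring]
    rw [hL _ ha3 _ (mul_mem (mul_mem ha0 ha1) ha2)]
    rw [show (a3 * (a0 * a1 * a2) : B) = (a3) * (a0 * a1 * a2) by noncomm_ring, htr]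
    all_goals exact congrArg τ (by noncomm_ring)
  have e0010 : τ (a0 * a1 * (D * a2 * Dinv) * a3) = τ (a0 * a1 * a2 * a3) := by
    rw [show (a0 * a1 * (D * a2 * Dinv) * a3 : B) = (a0 * a1) * (D * a2 * Dinv * a3) by noncomm_ring, htr,
        show (D * a2 * Dinv * a3) * (a0 * a1) = D * a2 * Dinv * (a3 * a0 * a1) by noncomm_ring]
    rw [hL _ ha2 _ (mul_mem (mul_mem ha3 ha0) ha1)]
    rw [show (a2 * (a3 * a0 * a1) : B) = (a2 * a3) * (a0 * a1) by noncomm_ring, htr]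
    all_goals exact congrArg τ (by noncomm_ring)
  have e0011 : τ (a0 * a1 * (D * a2 * Dinv) * (D * a3 * Dinv)) = τ (a0 * a1 * a2 * a3) := by
    rw [show (a0 * a1 * (D * a2 * Dinv) * (D * a3 * Dinv) : B) = (a0 * a1) * (D * a2 * Dinv * (D * a3 * Dinv)) by noncomm_ring, htr,
        show (D * a2 * Dinv * (D * a3 * Dinv)) * (a0 * a1) = D * a2 * Dinv * (D * a3 * Dinv) * (a0 * a1) by noncomm_ring]
    simp only [hmul]
    rw [hL _ (mul_mem ha2 ha3) _ (mul_mem ha0 ha1)]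
    rw [show ((a2 * a3) * (a0 * a1) : B) = (a2 * a3) * (a0 * a1) by noncomm_ring, htr]
    all_goals exact congrArg τ (by noncomm_ring)
  have e0100 : τ (a0 * (D * a1 * Dinv) * a2 * a3) = τ (a0 * a1 * a2 * a3) := by
    rw [show (a0 * (D * a1 * Dinv) * a2 * a3 : B) = (a0) * (D * a1 * Dinv * a2 * a3) by noncomm_ring, htr,
        show (D * a1 * Dinv * a2 * a3) * (a0) = D * a1 * Dinv * (a2 * a3 * a0) by noncomm_ring]
    rw [hL _ ha1 _ (mul_mem (mul_mem ha2 ha3) ha0)]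
    rw [show (a1 * (a2 * a3 * a0) : B) = (a1 * a2 * a3) * (a0) by noncomm_ring, htr]
    all_goals exact congrArg τ (by noncomm_ring)
  have e0110 : τ (a0 * (D * a1 * Dinv) * (D * a2 * Dinv) * a3) = τ (a0 * a1 * a2 * a3) := by
    rw [show (a0 * (D * a1 * Dinv) * (D * a2 * Dinv) * a3 : B) = (a0) * (D * a1 * Dinv * (D * a2 * Dinv) * a3) by noncomm_ring, htr,
        show (D * a1 * Dinv * (D * a2 * Dinv) * a3) * (a0) = D * a1 * Dinv * (D * a2 * Dinv) * (a3 * a0) by noncomm_ring]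
    simp only [hmul]
    rw [hL _ (mul_mem ha1 ha2) _ (mul_mem ha3 ha0)]
    rw [show ((a1 * a2) * (a3 * a0) : B) = (a1 * a2 * a3) * (a0) by noncomm_ring, htr]
    all_goals exact congrArg τ (by noncomm_ring)
  have e0111 : τ (a0 * (D * a1 * Dinv) * (D * a2 * Dinv) * (D * a3 * Dinv)) = τ (a0 * a1 * a2 * a3) := by
    rw [show (a0 * (D * a1 * Dinv) * (D * a2 * Dinv) * (D * a3 * Dinv) : B) = (a0) * (D * a1 * Dinv * (D * a2 * Dinv) * (D * a3 * Dinv)) by noncomm_ring, htr,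
        show (D * a1 * Dinv * (D * a2 * Dinv) * (D * a3 * Dinv)) * (a0) = D * a1 * Dinv * (D * a2 * Dinv) * (D * a3 * Dinv) * a0 by noncomm_ring]
    simp only [hmul]
    rw [hL _ (mul_mem (mul_mem ha1 ha2) ha3) _ ha0]
    rw [show ((a1 * a2 * a3) * a0 : B) = (a1 * a2 * a3) * (a0) by noncomm_ring, htr]
    all_goals exact congrArg τ (by noncomm_ring)
  have e1000 : τ (D * a0 * Dinv * a1 * a2 * a3) = τ (a0 * a1 * a2 * a3) := by
    rw [show (D * a0 * Dinv * a1 * a2 * a3 : B) = D * a0 * Dinv * (a1 * a2 * a3) by noncomm_ring]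
    rw [hL _ ha0 _ (mul_mem (mul_mem ha1 ha2) ha3)]
    all_goals exact congrArg τ (by noncomm_ring)
  have e1001 : τ (D * a0 * Dinv * a1 * a2 * (D * a3 * Dinv)) = τ (a0 * a1 * a2 * a3) := by
    rw [show (D * a0 * Dinv * a1 * a2 * (D * a3 * Dinv) : B) = (D * a0 * Dinv * a1 * a2) * (D * a3 * Dinv) by noncomm_ring, htr,
        show (D * a3 * Dinv) * (D * a0 * Dinv * a1 * a2) = D * a3 * Dinv * (D * a0 * Dinv) * (a1 * a2) by noncomm_ring]
    simp only [hmul]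
    rw [hL _ (mul_mem ha3 ha0) _ (mul_mem ha1 ha2)]
    rw [show ((a3 * a0) * (a1 * a2) : B) = (a3) * (a0 * a1 * a2) by noncomm_ring, htr]
    all_goals exact congrArg τ (by noncomm_ring)
  have e1011 : τ (D * a0 * Dinv * a1 * (D * a2 * Dinv) * (D * a3 * Dinv)) = τ (a0 * a1 * a2 * a3) := by
    rw [show (D * a0 * Dinv * a1 * (D * a2 * Dinv) * (D * a3 * Dinv) : B) = (D * a0 * Dinv * a1) * (D * a2 * Dinv * (D * a3 * Dinv)) by noncomm_ring, htr,
        show (D * a2 * Dinv * (D * a3 * Dinv)) * (D * a0 * Dinv * a1) = D * a2 * Dinv * (D * a3 * Dinv) * (D * a0 * Dinv) * a1 by noncomm_ring]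
    simp only [hmul]
    rw [hL _ (mul_mem (mul_mem ha2 ha3) ha0) _ ha1]
    rw [show ((a2 * a3 * a0) * a1 : B) = (a2 * a3) * (a0 * a1) by noncomm_ring, htr]
    all_goals exact congrArg τ (by noncomm_ring)
  have e1100 : τ (D * a0 * Dinv * (D * a1 * Dinv) * a2 * a3) = τ (a0 * a1 * a2 * a3) := by
    rw [show (D * a0 * Dinv * (D * a1 * Dinv) * a2 * a3 : B) = D * a0 * Dinv * (D * a1 * Dinv) * (a2 * a3) by noncomm_ring]
    simp only [hmul]
    rw [hL _ (mul_mem ha0 ha1) _ (mul_mem ha2 ha3)]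
    all_goals exact congrArg τ (by noncomm_ring)
  have e1101 : τ (D * a0 * Dinv * (D * a1 * Dinv) * a2 * (D * a3 * Dinv)) = τ (a0 * a1 * a2 * a3) := by
    rw [show (D * a0 * Dinv * (D * a1 * Dinv) * a2 * (D * a3 * Dinv) : B) = (D * a0 * Dinv * (D * a1 * Dinv) * a2) * (D * a3 * Dinv) by noncomm_ring, htr,
        show (D * a3 * Dinv) * (D * a0 * Dinv * (D * a1 * Dinv) * a2) = D * a3 * Dinv * (D * a0 * Dinv) * (D * a1 * Dinv) * a2 by noncomm_ring]
    simp only [hmul]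
    rw [hL _ (mul_mem (mul_mem ha3 ha0) ha1) _ ha2]
    rw [show ((a3 * a0 * a1) * a2 : B) = (a3) * (a0 * a1 * a2) by noncomm_ring, htr]
    all_goals exact congrArg τ (by noncomm_ring)
  have e1110 : τ (D * a0 * Dinv * (D * a1 * Dinv) * (D * a2 * Dinv) * a3) = τ (a0 * a1 * a2 * a3) := by
    simp only [hmul]
    rw [hL _ (mul_mem (mul_mem ha0 ha1) ha2) _ ha3]
    all_goals exact congrArg τ (by noncomm_ring)
  have e1111 : τ (D * a0 * Dinv * (D * a1 * Dinv) * (D * a2 * Dinv) * (D * a3 * Dinv)) = τ (a0 * a1 * a2 * a3) := by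
    simp only [hmul]
    rw [halpha]
  rw [e0001, e0010, e0011, e0100, e0110, e0111, e1000, e1001, e1011, e1100, e1101, e1110, e1111]
  ring
end

section
/- Let ∫ : Ω → ℂ be a closed graded trace of dimension 3, i.e. a ℂ-linear functional vanishing on Ωₙ for every n ≠ 3, satisfying ∫ ω η = (−1)^{pq} ∫ η ω for all ω ∈ Ω_p, η ∈ Ω_q, and ∫ dω = 0 for all ω ∈ Ω. Let u ∈ Ω₀ be invertible with inverse v ∈ Ω₀ and let A ∈ Ω₁, and set A' = γ_u(A) = u(dv) + uAv. Then the Chern–Simons functional CS(A) = ∫(A dA + (2/3) A³) satisfies CS(A') = CS(A) + (1/3) ∫ u (dv)(du)(dv). (This is Proposition 4.1: CS_ψ(γ_u(A)) = CS_ψ(A) + (1/3)⟨ψ,u⟩.) -/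
/-- for a closed graded trace `∫` of dimension 3 on a unital graded
ℂ-algebra `Ω` with differential `d`, the Chern-Simons functional
`CS(A) = ∫(A dA + (2/3) A³)` satisfies, for the gauge transform
`A' = u(dv) + uAv`: `CS(A') = CS(A) + (1/3) ∫ u(dv)(du)(dv)`. -/
theorem stmt4 {Ω : Type*} [Ring Ω] [Algebra ℂ Ω]
    (𝒜 : ℕ → Submodule ℂ Ω)
    (hone : (1 : Ω) ∈ 𝒜 0)
    (hmul : ∀ m n : ℕ, ∀ x ∈ 𝒜 m, ∀ y ∈ 𝒜 n, x * y ∈ 𝒜 (m + n))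
    (d : Ω →ₗ[ℂ] Ω)
    (hd : ∀ n : ℕ, ∀ ω ∈ 𝒜 n, d ω ∈ 𝒜 (n + 1))
    (hdd : ∀ ω : Ω, d (d ω) = 0)
    (hleib : ∀ n : ℕ, ∀ ω ∈ 𝒜 n, ∀ η : Ω,
      d (ω * η) = d ω * η + ((-1 : ℂ) ^ n) • (ω * d η))
    (T : Ω →ₗ[ℂ] ℂ)
    (hT3 : ∀ n : ℕ, n ≠ 3 → ∀ ω ∈ 𝒜 n, T ω = 0)
    (hTgr : ∀ p q : ℕ, ∀ ω ∈ 𝒜 p, ∀ η ∈ 𝒜 q,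
      T (ω * η) = ((-1 : ℂ) ^ (p * q)) * T (η * ω))
    (hTd : ∀ ω : Ω, T (d ω) = 0)
    (u v : Ω) (hu : u ∈ 𝒜 0) (hv : v ∈ 𝒜 0)
    (huv : u * v = 1) (hvu : v * u = 1)
    (A : Ω) (hA : A ∈ 𝒜 1) :
    T ((u * d v + u * A * v) * d (u * d v + u * A * v)) +
        (2 / 3 : ℂ) * T ((u * d v + u * A * v) * (u * d v + u * A * v) *
          (u * d v + u * A * v)) =
      (T (A * d A) + (2 / 3 : ℂ) * T (A * A * A)) +
        (1 / 3 : ℂ) * T (u * d v * d u * d v) := by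

  -- basic consequences
  have hone' : d (1:Ω) = 0 := by
    have h := hleib 0 1 hone 1
    simp at h
    exact h
  have hduv : d u * v = -(u * d v) := by
    have h := hleib 0 u hu v
    rw [huv, hone'] at h
    simp at h
    exact eq_neg_of_add_eq_zero_left h.symm
  have hdvu : d v * u = -(v * d u) := by
    have h := hleib 0 v hv u
    rw [hvu, hone'] at h
    simp at h
    exact eq_neg_of_add_eq_zero_left h.symm

  -- memberships
  have hdu : d u ∈ 𝒜 1 := hd 0 u hu
  have hdv : d v ∈ 𝒜 1 := hd 0 v hv
  have hdA : d A ∈ 𝒜 2 := hd 1 A hA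
  -- element identities
  have I1 : u * d v * u = -d u := by
    rw [mul_assoc, hdvu, mul_neg, ← mul_assoc, huv, one_mul]
  have I2 : v * d u * v = -d v := by
    rw [mul_assoc, hduv, mul_neg, ← mul_assoc, hvu, one_mul]
  -- cyclicity helpers
  have cyc12 : ∀ x ∈ 𝒜 1, ∀ y ∈ 𝒜 2, T (x * y) = T (y * x) := by
    intro x hx y hy
    have h := hTgr 1 2 x hx y hy
    simpa using h
  have cyc30 : ∀ x ∈ 𝒜 3, ∀ y ∈ 𝒜 0, T (x * y) = T (y * x) := by
    intro x hx y hy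
    have h := hTgr 3 0 x hx y hy
    simpa using h
  -- derivatives
  have hD1 : d (u * d v) = d u * d v := by
    have h := hleib 0 u hu (d v)
    rw [hdd] at h
    simpa using h
  have hD2 : d (u * A * v) = d u * A * v + u * d A * v - u * A * d v := by
    have h1 : d (u * A) = d u * A + u * d A := by
      have h := hleib 0 u hu A
      simpa using h
    have h := hleib 1 (u * A) (by simpa using hmul 0 1 u hu A hA) v
    rw [h1] at h
    simp only [pow_one, neg_smul, one_smul] at h
    rw [h]
    noncomm_ring
  have hDtot : d (u * d v + u * A * v)
      = d u * d v + (d u * A * v + u * d A * v - u * A * d v) := by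
    rw [map_add, hD1, hD2]
  rw [hDtot]
  simp only [mul_add, add_mul, mul_sub, sub_mul, map_add, map_sub]

  -- extra relation
  have hvdu : v * d u = -(d v * u) := by rw [hdvu, neg_neg]
  have key4 : ∀ x : Ω, v * (u * x) = x := by
    intro x; rw [← mul_assoc, hvu, one_mul]
  -- more cyc helpers
  have cyc21 : ∀ x ∈ 𝒜 2, ∀ y ∈ 𝒜 1, T (x * y) = T (y * x) := by
    intro x hx y hy
    have h := hTgr 2 1 x hx y hy
    simpa using h
  have cyc03 : ∀ x ∈ 𝒜 0, ∀ y ∈ 𝒜 3, T (x * y) = T (y * x) := by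
    intro x hx y hy
    have h := hTgr 0 3 x hx y hy
    simpa using h
  -- memberships
  have mem_uA : u * A ∈ 𝒜 1 := hmul 0 1 u hu A hA
  have mem_udv : u * d v ∈ 𝒜 1 := hmul 0 1 u hu _ hdv
  have mem_uAv : u * A * v ∈ 𝒜 1 := hmul 1 0 (u*A) mem_uA v hv
  have mem_Adv : A * d v ∈ 𝒜 2 := hmul 1 1 A hA _ hdv
  have mem_dvdu : d v * d u ∈ 𝒜 2 := hmul 1 1 _ hdv _ hdu
  have mem_dudv : d u * d v ∈ 𝒜 2 := hmul 1 1 _ hdu _ hdv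
  have mem_uAdv : u * A * d v ∈ 𝒜 2 := hmul 1 1 (u*A) mem_uA _ hdv
  have mem_vdu : v * d u ∈ 𝒜 1 := hmul 0 1 v hv _ hdu
  have mem_duA : d u * A ∈ 𝒜 2 := hmul 1 1 _ hdu A hA
  have mem_Avdu : A * (v * d u) ∈ 𝒜 2 := hmul 1 1 A hA _ mem_vdu
  have mem_vduA : v * (d u * A) ∈ 𝒜 2 := hmul 0 2 v hv _ mem_duA
  have mem3_Q3 : u * (d v * (d u * A)) ∈ 𝒜 3 :=
    hmul 0 3 u hu _ (hmul 1 2 _ hdv _ mem_duA)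
  have mem3_Q4 : u * (A * (v * (d u * A))) ∈ 𝒜 3 :=
    hmul 0 3 u hu _ (hmul 1 2 A hA _ mem_vduA)
  have mem3_dudA : d u * d A ∈ 𝒜 3 := hmul 1 2 _ hdu _ hdA
  have mem3_AdA : A * d A ∈ 𝒜 3 := hmul 1 2 A hA _ hdA
  have mem3_uAdA : u * (A * d A) ∈ 𝒜 3 := hmul 0 3 u hu _ mem3_AdA
  have mem3_AAdv : A * (A * d v) ∈ 𝒜 3 := hmul 1 2 A hA _ mem_Adv
  have mem3_duAA : d u * (A * A) ∈ 𝒜 3 := hmul 1 2 _ hdu _ (hmul 1 1 A hA A hA)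
  have mem3_C6 : u * (A * (d v * (u * A))) ∈ 𝒜 3 :=
    hmul 0 3 u hu _ (hmul 1 2 A hA _ (hmul 1 1 _ hdv _ mem_uA))
  have mem3_AAA : u * (A * (A * A)) ∈ 𝒜 3 :=
    hmul 0 3 u hu _ (hmul 1 2 A hA _ (hmul 1 1 A hA A hA))
  -- exactness relation : T(v du dA) = T(dv du A)
  have hE : T (v * (d u * d A)) = T (d v * (d u * A)) := by
    have h1 : d (d u * A) = -(d u * d A) := by
      have h := hleib 1 (d u) hdu A
      rw [hdd] at h
      simpa using h
    have h2 := hleib 0 v hv (d u * A)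
    rw [h1] at h2
    simp only [pow_zero, one_smul, mul_neg] at h2
    have h3 := hTd (v * (d u * A))
    rw [h2] at h3
    simp only [map_add, map_neg] at h3
    linear_combination -h3
  -- auxiliary trace values
  have hAux1 : T (d u * (A * d v)) = T (d v * (d u * A)) := by
    rw [cyc12 (d u) hdu (A * d v) mem_Adv,
      show (A * d v) * d u = A * (d v * d u) by noncomm_ring,
      cyc12 A hA (d v * d u) mem_dvdu,
      show (d v * d u) * A = d v * (d u * A) by noncomm_ring]
  have hAux2 : T (u * (A * (A * d v))) = -T (A * (v * (d u * A))) := by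
    rw [cyc03 u hu (A * (A * d v)) mem3_AAdv,
      show (A * (A * d v)) * u = A * (A * (d v * u)) by noncomm_ring, hdvu,
      show A * (A * -(v * d u)) = -(A * (A * (v * d u))) by noncomm_ring,
      map_neg, cyc12 A hA (A * (v * d u)) mem_Avdu,
      show (A * (v * d u)) * A = A * (v * (d u * A)) by noncomm_ring]
  -- the sixteen monomials
  have hQ1 : T (u * d v * (d u * d v)) = T (u * d v * d u * d v) :=
    congrArg T (by noncomm_ring)
  have hQ3 : T (u * d v * (d u * A * v)) = T (d v * (d u * A)) := by
    rw [show u * d v * (d u * A * v) = (u * (d v * (d u * A))) * v by noncomm_ring,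
      cyc30 _ mem3_Q3 v hv, key4]
  have hQ7' : T (u * d v * (u * A * d v)) = -T (d v * (d u * A)) := by
    rw [show u * d v * (u * A * d v) = (u * d v * u) * (A * d v) by noncomm_ring,
      I1, neg_mul, map_neg, hAux1]
  have hQ2 : T (u * A * v * (d u * d v)) = T (d v * (d u * A)) := by
    rw [show u * A * v * (d u * d v) = u * A * (v * d u) * d v by noncomm_ring,
      hvdu, show u * A * -(d v * u) * d v = -((u * A * d v) * (u * d v)) by noncomm_ring,
      map_neg, cyc21 (u * A * d v) mem_uAdv (u * d v) mem_udv, hQ7', neg_neg]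
  have hQ4 : T (u * A * v * (d u * A * v)) = T (A * (v * (d u * A))) := by
    rw [show u * A * v * (d u * A * v) = (u * (A * (v * (d u * A)))) * v by noncomm_ring,
      cyc30 _ mem3_Q4 v hv, key4]
  have hQ5 : T (u * d v * (u * d A * v)) = -T (d v * (d u * A)) := by
    rw [show u * d v * (u * d A * v) = (u * d v * u) * (d A * v) by noncomm_ring,
      I1, neg_mul, map_neg,
      show d u * (d A * v) = (d u * d A) * v by noncomm_ring,
      cyc30 _ mem3_dudA v hv, hE]
  have hQ6 : T (u * A * v * (u * d A * v)) = T (A * d A) := by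
    rw [show u * A * v * (u * d A * v) = (u * A) * ((v * u) * (d A * v)) by noncomm_ring,
      hvu, show (u * A) * (1 * (d A * v)) = (u * (A * d A)) * v by noncomm_ring,
      cyc30 _ mem3_uAdA v hv, key4]
  have hQ8 : T (u * A * v * (u * A * d v)) = -T (A * (v * (d u * A))) := by
    rw [show u * A * v * (u * A * d v) = (u * A) * ((v * u) * (A * d v)) by noncomm_ring,
      hvu, show (u * A) * (1 * (A * d v)) = u * (A * (A * d v)) by noncomm_ring, hAux2]
  have hC1 : T (u * d v * (u * d v) * (u * d v)) = -T (u * d v * d u * d v) := by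
    rw [show u * d v * (u * d v) * (u * d v) = (u * d v * u) * ((d v * u) * d v) by noncomm_ring,
      I1, hdvu,
      show (-d u) * (-(v * d u) * d v) = (d u * v) * (d u * d v) by noncomm_ring,
      hduv, show -(u * d v) * (d u * d v) = -(u * d v * d u * d v) by noncomm_ring, map_neg]
  have hC2 : T (u * A * v * (u * d v) * (u * d v)) = -T (d v * (d u * A)) := by
    rw [show u * A * v * (u * d v) * (u * d v) = (u * A) * ((v * u) * ((d v * u) * d v)) by noncomm_ring,
      hvu, hdvu,
      show (u * A) * (1 * (-(v * d u) * d v)) = -(u * A * v * (d u * d v)) by noncomm_ring,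
      map_neg, hQ2]
  have hC3 : T (u * d v * (u * A * v) * (u * d v)) = -T (d v * (d u * A)) := by
    rw [show u * d v * (u * A * v) * (u * d v) = (u * d v * u) * (A * ((v * u) * d v)) by noncomm_ring,
      I1, hvu, show (-d u) * (A * (1 * d v)) = -(d u * (A * d v)) by noncomm_ring,
      map_neg, hAux1]
  have hC4 : T (u * A * v * (u * A * v) * (u * d v)) = -T (A * (v * (d u * A))) := by
    rw [show u * A * v * (u * A * v) * (u * d v) = (u * A) * ((v * u) * (A * ((v * u) * d v))) by noncomm_ring,
      hvu, show (u * A) * (1 * (A * (1 * d v))) = u * (A * (A * d v)) by noncomm_ring, hAux2]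
  have hC5 : T (u * d v * (u * d v) * (u * A * v)) = -T (d v * (d u * A)) := by
    rw [show u * d v * (u * d v) * (u * A * v) = (u * d v * u) * (d v * (u * A * v)) by noncomm_ring,
      I1, show (-d u) * (d v * (u * A * v)) = -((d u * d v) * (u * A * v)) by noncomm_ring,
      map_neg, cyc21 (d u * d v) mem_dudv (u * A * v) mem_uAv, hQ2]
  have hC6 : T (u * A * v * (u * d v) * (u * A * v)) = -T (A * (v * (d u * A))) := by
    rw [show u * A * v * (u * d v) * (u * A * v) = (u * (A * ((v * u) * (d v * (u * A))))) * v by noncomm_ring,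
      hvu, show (u * (A * (1 * (d v * (u * A))))) * v = (u * (A * (d v * (u * A)))) * v by noncomm_ring,
      cyc30 _ mem3_C6 v hv, key4,
      show A * (d v * (u * A)) = A * ((d v * u) * A) by noncomm_ring, hdvu,
      show A * (-(v * d u) * A) = -(A * (v * (d u * A))) by noncomm_ring, map_neg]
  have hC7 : T (u * d v * (u * A * v) * (u * A * v)) = -T (A * (v * (d u * A))) := by
    rw [show u * d v * (u * A * v) * (u * A * v) = (u * d v * u) * (A * ((v * u) * (A * v))) by noncomm_ring,
      I1, hvu, show (-d u) * (A * (1 * (A * v))) = -((d u * (A * A)) * v) by noncomm_ring,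
      map_neg, cyc30 _ mem3_duAA v hv,
      show v * (d u * (A * A)) = (v * (d u * A)) * A by noncomm_ring,
      cyc21 _ mem_vduA A hA]
  have hC8 : T (u * A * v * (u * A * v) * (u * A * v)) = T (A * A * A) := by
    rw [show u * A * v * (u * A * v) * (u * A * v)
        = (u * (A * ((v * u) * (A * ((v * u) * A))))) * v by noncomm_ring,
      hvu, show (u * (A * (1 * (A * (1 * A))))) * v = (u * (A * (A * A))) * v by noncomm_ring,
      cyc30 _ mem3_AAA v hv, key4]
    exact congrArg T (by noncomm_ring)
  rw [hQ1, hQ2, hQ3, hQ4, hQ5, hQ6, hQ7', hQ8, hC1, hC2, hC3, hC4, hC5, hC6, hC7, hC8]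
  ring
end

section
/- For all a, b, c ∈ A and all ε₁, ε₂, ε₃ ∈ {0,1} one has τ(α^{ε₁}(a) α^{ε₂}(b) α^{ε₃}(c)) = τ(a b c), where α⁰ is the identity map and α¹ = α. (Equation (removealpha): the tadpole hypothesis allows removing any pattern of conjugations α(x) = D x D⁻¹ inside a three-letter word under the trace.) -/
/-- under the vanishing tadpole hypothesis, with `α(x) = D x D⁻¹`,
for all `a,b,c ∈ A` and all `ε₁,ε₂,ε₃ ∈ {0,1}`:
`τ(α^{ε₁}(a) α^{ε₂}(b) α^{ε₃}(c)) = τ(a b c)`. -/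
theorem stmt5 {B : Type*} [Ring B] [Algebra ℂ B]
    (τ : B →ₗ[ℂ] ℂ) (htr : ∀ x y : B, τ (x * y) = τ (y * x))
    (D Dinv : B) (hD : D * Dinv = 1) (hDinv : Dinv * D = 1)
    (A : Subalgebra ℂ B)
    (htad : ∀ a ∈ A, ∀ b ∈ A, τ (a * (D * b - b * D) * Dinv) = 0) :
    ∀ a ∈ A, ∀ b ∈ A, ∀ c ∈ A,
      ∀ ε₁ ∈ ({0, 1} : Set ℕ), ∀ ε₂ ∈ ({0, 1} : Set ℕ), ∀ ε₃ ∈ ({0, 1} : Set ℕ),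
        τ ((fun x => D * x * Dinv)^[ε₁] a * (fun x => D * x * Dinv)^[ε₂] b *
            (fun x => D * x * Dinv)^[ε₃] c) = τ (a * b * c) := by
  have key : ∀ x ∈ A, ∀ y ∈ A, τ (x * (D * y * Dinv)) = τ (x * y) := by
    intro x _ y _
    have h := htad x ‹x ∈ A› y ‹y ∈ A›
    have e : x * (D * y - y * D) * Dinv = x * (D * y * Dinv) - x * y := by
      have : x * (y * D) * Dinv = x * y * (D * Dinv) := by noncomm_ring
      rw [mul_sub, sub_mul, this, hD, mul_one]
      noncomm_ring
    rw [e, map_sub, sub_eq_zero] at h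
    exact h
  have αmul : ∀ x y : B, (D * x * Dinv) * (D * y * Dinv) = D * (x * y) * Dinv := by
    intro x y
    calc (D * x * Dinv) * (D * y * Dinv) = D * x * ((Dinv * D) * (y * Dinv)) := by
          noncomm_ring
      _ = D * (x * y) * Dinv := by rw [hDinv, one_mul]; noncomm_ring
  have conj : ∀ w : B, τ (D * w * Dinv) = τ w := by
    intro w
    rw [mul_assoc, htr, mul_assoc, hDinv, mul_one]
  intro a ha b hb c hc ε₁ hε₁ ε₂ hε₂ ε₃ hε₃
  simp only [Set.mem_insert_iff, Set.mem_singleton_iff] at hε₁ hε₂ hε₃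
  rcases hε₁ with rfl | rfl <;> rcases hε₂ with rfl | rfl <;> rcases hε₃ with rfl | rfl <;>
    simp only [Function.iterate_zero, Function.iterate_one, id_eq]
  · -- (0,0,1)
    exact key (a * b) (mul_mem ha hb) c hc
  · -- (0,1,0)
    rw [htr, ← mul_assoc, key (c * a) (mul_mem hc ha) b hb, mul_assoc, htr]
  · -- (0,1,1)
    rw [mul_assoc, αmul, key a ha (b * c) (mul_mem hb hc), ← mul_assoc]
  · -- (1,0,0)
    rw [mul_assoc, htr, key (b * c) (mul_mem hb hc) a ha, htr, ← mul_assoc]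
  · -- (1,0,1)
    rw [htr, ← mul_assoc, αmul, htr, key b hb (c * a) (mul_mem hc ha), htr,
      mul_assoc, htr]
  · -- (1,1,0)
    rw [αmul, htr, key c hc (a * b) (mul_mem ha hb), htr]
  · -- (1,1,1)
    rw [αmul, αmul, conj]
end

section
/- For all a, b, c ∈ A one has τ(a [D,b] D⁻¹ [D,c] D⁻¹) = 0. (This is the vanishing used in the proof of Lemma 3.2: ∫− a[D,b]D⁻¹[D,c]D⁻¹ = ∫− a(α(b)−b)(α(c)−c) = 0.) -/
/-- under the vanishing tadpole hypothesis, for all `a, b, c ∈ A`,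
`τ(a [D,b] D⁻¹ [D,c] D⁻¹) = 0`. -/
theorem stmt6 {B : Type*} [Ring B] [Algebra ℂ B]
    (τ : B →ₗ[ℂ] ℂ) (htr : ∀ x y : B, τ (x * y) = τ (y * x))
    (D Dinv : B) (hD : D * Dinv = 1) (hDinv : Dinv * D = 1)
    (A : Subalgebra ℂ B)
    (htad : ∀ a ∈ A, ∀ b ∈ A, τ (a * (D * b - b * D) * Dinv) = 0) :
    ∀ a ∈ A, ∀ b ∈ A, ∀ c ∈ A,
      τ (a * (D * b - b * D) * Dinv * (D * c - c * D) * Dinv) = 0 := by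
  have hD' : ∀ x : B, D * (Dinv * x) = x := fun x => by rw [← mul_assoc, hD, one_mul]
  have hDinv' : ∀ x : B, Dinv * (D * x) = x := fun x => by rw [← mul_assoc, hDinv, one_mul]
  -- tadpole rephrased: τ (x * D * y * Dinv) = τ (x * y)
  have h1 : ∀ x ∈ A, ∀ y ∈ A, τ (x * (D * (y * Dinv))) = τ (x * y) := by
    intro x hx y hy
    have h := htad x hx y hy
    have e : x * (D * y - y * D) * Dinv = x * (D * (y * Dinv)) - x * y := by
      simp only [mul_sub, sub_mul, mul_assoc, hD, hD', mul_one]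
    rw [e, map_sub, sub_eq_zero] at h
    exact h
  intro a ha b hb c hc
  have e : a * (D * b - b * D) * Dinv * (D * c - c * D) * Dinv
      = (a * (D * (b * c * Dinv)) - (c * a) * (D * (b * Dinv)))
        - (a * b * (D * c - c * D) * Dinv) +
        ((c * a) * (D * (b * Dinv)) - a * (D * (b * (Dinv * (c * (D * Dinv)))))) := by
    simp only [mul_sub, sub_mul, mul_assoc, hD', hDinv', hD, hDinv, mul_one]
    abel
  rw [e, map_add, map_sub, map_sub, h1 a ha (b * c) (mul_mem hb hc),
    h1 (c * a) (mul_mem hc ha) b hb, htad (a * b) (mul_mem ha hb) c hc]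
  have hT4 : τ (a * (D * (b * (Dinv * (c * (D * Dinv)))))) = τ (c * a * (D * (b * Dinv))) := by
    rw [hD, mul_one]
    have e2 : a * (D * (b * (Dinv * c))) = (a * (D * (b * Dinv))) * c := by
      simp only [mul_assoc]
    rw [e2, htr]
    simp only [mul_assoc]
  rw [map_sub, hT4]
  have e3 : τ (c * a * b) = τ (a * (b * c)) := by
    rw [mul_assoc, htr, mul_assoc]
  rw [e3]
  ring
end

section
/- For all a₀, a₁, a₂, a₃ ∈ A one has τ(a₀ [D,a₁] D⁻¹ a₂ [D,a₃] D⁻¹) = −τ(a₀ [D,a₁] D⁻¹ [D,a₂] D⁻¹ [D,a₃] D⁻¹). (Equation (pol2): ∫− a₀[D,a₁]D⁻¹ a₂[D,a₃]D⁻¹ = −φ(a₀,a₁,a₂,a₃).) -/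
section aux

variable {B : Type*} [Ring B] [Algebra ℂ B]
    (τ : B →ₗ[ℂ] ℂ) (htr : ∀ x y : B, τ (x * y) = τ (y * x))
    (D Dinv : B) (hD : D * Dinv = 1) (hDinv : Dinv * D = 1)
    (A : Subalgebra ℂ B)
    (htad : ∀ a ∈ A, ∀ b ∈ A, τ (a * (D * b - b * D) * Dinv) = 0)

include htad in
lemma tad3aux : ∀ a ∈ A, ∀ b ∈ A, ∀ c ∈ A,
    τ (a * (D * b - b * D) * c * Dinv) = 0 := by
  intro a ha b hb c hc
  have h1 := htad a ha (b * c) (mul_mem hb hc)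
  have h2 := htad (a * b) (mul_mem ha hb) c hc
  have key : τ (a * (D * b - b * D) * c * Dinv)
      = τ (a * (D * (b * c) - (b * c) * D) * Dinv) - τ ((a * b) * (D * c - c * D) * Dinv) := by
    rw [← map_sub]; congr 1; noncomm_ring
  rw [key, h1, h2, sub_zero]

include htr hD hDinv htad in
lemma pairaux : ∀ a ∈ A, ∀ b ∈ A, ∀ c ∈ A,
    τ (a * (D * b - b * D) * Dinv * (D * c - c * D) * Dinv) = 0 := by
  intro a ha b hb c hc
  have h1 := tad3aux τ D Dinv A htad a ha b hb c hc
  have h2 := htad (c * a) (mul_mem hc ha) b hb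
  have e : a * (D * b - b * D) * Dinv * (D * c - c * D) * Dinv
      = a * (D * b - b * D) * (Dinv * D) * c * Dinv
        - a * (D * b - b * D) * Dinv * c * (D * Dinv) := by noncomm_ring
  rw [hD, hDinv, mul_one, mul_one] at e
  have key : τ (a * (D * b - b * D) * Dinv * (D * c - c * D) * Dinv)
      = τ (a * (D * b - b * D) * c * Dinv) - τ ((a * (D * b - b * D) * Dinv) * c) := by
    rw [← map_sub, e]
  rw [key, h1, htr, zero_sub]
  have e2 : c * (a * (D * b - b * D) * Dinv) = (c * a) * (D * b - b * D) * Dinv := by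
    noncomm_ring
  rw [e2, h2, neg_zero]

end aux

/-- under the vanishing tadpole hypothesis, for all `a₀,a₁,a₂,a₃ ∈ A`,
`τ(a₀ [D,a₁] D⁻¹ a₂ [D,a₃] D⁻¹) = -τ(a₀ [D,a₁] D⁻¹ [D,a₂] D⁻¹ [D,a₃] D⁻¹)`. -/
theorem stmt7 {B : Type*} [Ring B] [Algebra ℂ B]
    (τ : B →ₗ[ℂ] ℂ) (htr : ∀ x y : B, τ (x * y) = τ (y * x))
    (D Dinv : B) (hD : D * Dinv = 1) (hDinv : Dinv * D = 1)
    (A : Subalgebra ℂ B)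
    (htad : ∀ a ∈ A, ∀ b ∈ A, τ (a * (D * b - b * D) * Dinv) = 0) :
    ∀ a0 ∈ A, ∀ a1 ∈ A, ∀ a2 ∈ A, ∀ a3 ∈ A,
      τ (a0 * (D * a1 - a1 * D) * Dinv * a2 * (D * a3 - a3 * D) * Dinv) =
        - τ (a0 * (D * a1 - a1 * D) * Dinv * (D * a2 - a2 * D) * Dinv *
            (D * a3 - a3 * D) * Dinv) := by
  intro a0 h0 a1 h1 a2 h2 a3 h3
  have p1 := pairaux τ htr D Dinv hD hDinv A htad a0 h0 (a1 * a2) (mul_mem h1 h2) a3 h3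
  have p2 := pairaux τ htr D Dinv hD hDinv A htad (a0 * a1) (mul_mem h0 h1) a2 h2 a3 h3
  -- split Dinv * a2 using the inverse relations
  have m1 : a0 * (D * a1 - a1 * D) * Dinv * (D * a2 - a2 * D) * Dinv *
        (D * a3 - a3 * D) * Dinv
      = a0 * (D * a1 - a1 * D) * (Dinv * D) * a2 * Dinv * (D * a3 - a3 * D) * Dinv
        - a0 * (D * a1 - a1 * D) * Dinv * a2 * (D * Dinv) * (D * a3 - a3 * D) * Dinv := by
    noncomm_ring
  rw [hD, hDinv, mul_one, mul_one] at m1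
  -- vanishing of the first resulting term
  have hY : τ (a0 * (D * a1 - a1 * D) * a2 * Dinv * (D * a3 - a3 * D) * Dinv) = 0 := by
    have key : τ (a0 * (D * a1 - a1 * D) * a2 * Dinv * (D * a3 - a3 * D) * Dinv)
        = τ (a0 * (D * (a1 * a2) - (a1 * a2) * D) * Dinv * (D * a3 - a3 * D) * Dinv)
          - τ (a0 * a1 * (D * a2 - a2 * D) * Dinv * (D * a3 - a3 * D) * Dinv) := by
      rw [← map_sub]; congr 1; noncomm_ring
    rw [key, p1, p2, sub_zero]
  have m1' : a0 * (D * a1 - a1 * D) * Dinv * a2 * (D * a3 - a3 * D) * Dinv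
      = a0 * (D * a1 - a1 * D) * a2 * Dinv * (D * a3 - a3 * D) * Dinv
        - a0 * (D * a1 - a1 * D) * Dinv * (D * a2 - a2 * D) * Dinv *
            (D * a3 - a3 * D) * Dinv := by
    rw [m1]; noncomm_ring
  rw [m1', map_sub, hY, zero_sub]
end

section
/- Let ∫ : Ω → ℂ be a ℂ-linear functional satisfying the centrality condition ∫ a ω = ∫ ω a for all a ∈ Ω₀ and ω ∈ Ω. Let u ∈ Ω₀ be invertible with inverse v ∈ Ω₀ and let A ∈ Ω₁, and set A' = γ_u(A) = u(dv) + uAv. Then the Yang–Mills functional YM(A) = ∫ (dA + A²)² is gauge invariant: ∫ (dA' + A'²)² = ∫ (dA + A²)². (This is the paper's assertion that YM_τ is automatically invariant under gauge transformations as soon as τ is a Hochschild cocycle, since F(A) = dA + A² transforms covariantly.) -/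
/-- for a linear functional `∫` on a unital graded ℂ-algebra `Ω`
satisfying the centrality condition `∫ aω = ∫ ωa` for `a ∈ Ω₀`, the Yang-Mills
functional `YM(A) = ∫ (dA + A²)²` is gauge invariant:
`∫ (dA' + A'²)² = ∫ (dA + A²)²` for `A' = u(dv) + uAv`. -/
theorem stmt10 {Ω : Type*} [Ring Ω] [Algebra ℂ Ω]
    (𝒜 : ℕ → Submodule ℂ Ω)
    (hone : (1 : Ω) ∈ 𝒜 0)
    (hmul : ∀ m n : ℕ, ∀ x ∈ 𝒜 m, ∀ y ∈ 𝒜 n, x * y ∈ 𝒜 (m + n))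
    (d : Ω →ₗ[ℂ] Ω)
    (hd : ∀ n : ℕ, ∀ ω ∈ 𝒜 n, d ω ∈ 𝒜 (n + 1))
    (hdd : ∀ ω : Ω, d (d ω) = 0)
    (hleib : ∀ n : ℕ, ∀ ω ∈ 𝒜 n, ∀ η : Ω,
      d (ω * η) = d ω * η + ((-1 : ℂ) ^ n) • (ω * d η))
    (T : Ω →ₗ[ℂ] ℂ)
    (hTc : ∀ a ∈ 𝒜 0, ∀ ω : Ω, T (a * ω) = T (ω * a))
    (u v : Ω) (hu : u ∈ 𝒜 0) (hv : v ∈ 𝒜 0)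
    (huv : u * v = 1) (hvu : v * u = 1)
    (A : Ω) (hA : A ∈ 𝒜 1) :
    T ((d (u * d v + u * A * v) + (u * d v + u * A * v) * (u * d v + u * A * v)) *
        (d (u * d v + u * A * v) + (u * d v + u * A * v) * (u * d v + u * A * v)))
      = T ((d A + A * A) * (d A + A * A)) := by
  -- d 1 = 0
  have h1 : d (1 : Ω) = 0 := by
    have h := hleib 0 1 hone 1
    simp only [pow_zero, one_smul, one_mul, mul_one] at h
    have := h.symm
    rwa [add_eq_left] at this
  -- relations from d(uv) = d(vu) = d1 = 0
  have hduv : d u * v = -(u * d v) := by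
    have h := hleib 0 u hu v
    rw [huv, h1, pow_zero, one_smul] at h
    exact eq_neg_of_add_eq_zero_left h.symm
  have hdvu : d v * u = -(v * d u) := by
    have h := hleib 0 v hv u
    rw [hvu, h1, pow_zero, one_smul] at h
    exact eq_neg_of_add_eq_zero_left h.symm
  -- Leibniz pieces
  have e1 : d (u * d v) = d u * d v := by
    have h := hleib 0 u hu (d v)
    simpa [hdd] using h
  have e2 : d (u * A * v) = d u * A * v + u * d A * v - u * A * d v := by
    have hA1 : d (u * A) = d u * A + u * d A := by
      simpa using hleib 0 u hu A
    have h := hleib 1 (u * A) (hmul 0 1 u hu A hA) v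
    rw [hA1, pow_one, neg_one_smul] at h
    rw [h]; noncomm_ring
  -- products
  have p1 : (u * d v) * (u * d v) = -(d u * d v) := by
    have h : (u * d v) * (u * d v) = u * (d v * u) * d v := by noncomm_ring
    rw [h, hdvu, mul_neg, neg_mul]
    congr 1
    rw [show u * (v * d u) * d v = (u * v) * (d u * d v) by noncomm_ring, huv, one_mul]
  have p2 : (u * d v) * (u * A * v) = -(d u * A * v) := by
    have h : (u * d v) * (u * A * v) = u * (d v * u) * (A * v) := by noncomm_ring
    rw [h, hdvu, mul_neg, neg_mul]
    congr 1
    rw [show u * (v * d u) * (A * v) = (u * v) * (d u * A * v) by noncomm_ring, huv, one_mul]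
  have p3 : (u * A * v) * (u * d v) = u * A * d v := by
    rw [show (u * A * v) * (u * d v) = u * A * ((v * u) * d v) by noncomm_ring, hvu, one_mul]
  have p4 : (u * A * v) * (u * A * v) = u * (A * A) * v := by
    rw [show (u * A * v) * (u * A * v) = u * (A * ((v * u) * (A * v))) by noncomm_ring, hvu]
    noncomm_ring
  -- the curvature transforms covariantly
  have key : d (u * d v + u * A * v) + (u * d v + u * A * v) * (u * d v + u * A * v)
      = u * (d A + A * A) * v := by
    rw [map_add, e1, e2,
      show (u * d v + u * A * v) * (u * d v + u * A * v)
        = (u * d v) * (u * d v) + (u * d v) * (u * A * v)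
          + (u * A * v) * (u * d v) + (u * A * v) * (u * A * v) by noncomm_ring,
      p1, p2, p3, p4]
    noncomm_ring
  rw [key]
  set F := d A + A * A with hF
  rw [show u * F * v * (u * F * v) = u * (F * F * v) by
    rw [show u * F * v * (u * F * v) = u * (F * ((v * u) * (F * v))) by noncomm_ring, hvu]
    noncomm_ring]
  rw [hTc u hu (F * F * v), mul_assoc, hvu, mul_one]
end

section
/- Let R be a unital ring, u an invertible element of R, and for T ∈ R define ∇(T) = uT − Tu. Then for every T ∈ R and every natural number n: u⁻¹ T = Σ_{k=0}^{n} (−1)^k ∇^k(T) u^{−(k+1)} + (−1)^{n+1} u⁻¹ ∇^{n+1}(T) u^{−(n+1)}, where ∇^k denotes the k-fold iterate of ∇ and u^{−m} = (u⁻¹)^m. (This is Lemma 2.1(b) with u = D²: D⁻² T = Σ_{k=0}^{n} (−1)^k ∇^k(T) D^{−2k−2} + (−1)^{n+1} D⁻² ∇^{n+1}(T) D^{−2n−2}.) -/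
/-- in a unital ring `R` with `u` invertible and `∇(T) = uT - Tu`,
for all `T` and `n`:
`u⁻¹ T = Σ_{k=0}^{n} (-1)^k ∇^k(T) u^{-(k+1)} + (-1)^{n+1} u⁻¹ ∇^{n+1}(T) u^{-(n+1)}`. -/
theorem stmt11 {R : Type*} [Ring R]
    (u uinv : R) (hu : u * uinv = 1) (hu' : uinv * u = 1)
    (T : R) (n : ℕ) :
    uinv * T =
      (∑ k ∈ Finset.range (n + 1),
        ((-1 : ℤ) ^ k) • ((fun S => u * S - S * u)^[k] T * uinv ^ (k + 1))) +
      ((-1 : ℤ) ^ (n + 1)) •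
        (uinv * (fun S => u * S - S * u)^[n + 1] T * uinv ^ (n + 1)) := by
  have key : ∀ S : R, uinv * S = S * uinv - uinv * (u * S - S * u) * uinv := by
    intro S
    have h : uinv * (u * S - S * u) * uinv = S * uinv - uinv * S := by
      rw [mul_sub, sub_mul, ← mul_assoc, ← mul_assoc, hu', one_mul, mul_assoc, mul_assoc, hu,
        mul_one]
    rw [h]; abel
  induction n with
  | zero =>
    simp only [Finset.sum_range_one, Function.iterate_one, Function.iterate_zero, id_eq,
      pow_zero, pow_one, one_smul, zero_add, neg_one_zsmul]
    rw [key T]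
    abel
  | succ n ih =>
    rw [Finset.sum_range_succ]
    have step : ((-1 : ℤ) ^ (n + 1)) •
        (uinv * (fun S => u * S - S * u)^[n + 1] T * uinv ^ (n + 1)) =
        ((-1 : ℤ) ^ (n + 1)) • ((fun S => u * S - S * u)^[n + 1] T * uinv ^ (n + 1 + 1)) +
        ((-1 : ℤ) ^ (n + 1 + 1)) •
          (uinv * (fun S => u * S - S * u)^[n + 1 + 1] T * uinv ^ (n + 1 + 1)) := by
      rw [key ((fun S => u * S - S * u)^[n + 1] T)]
      rw [Function.iterate_succ_apply' (fun S => u * S - S * u) (n + 1)]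
      rw [pow_succ (-1 : ℤ) (n + 1), mul_smul, neg_one_zsmul, sub_mul, smul_sub]
      rw [pow_succ' uinv (n + 1)]
      simp only [mul_assoc, smul_neg]
      rw [sub_eq_add_neg]
    rw [ih, step, ← add_assoc]
end

section
/- Let D ∈ 𝒜 be invertible and A ∈ 𝒜 with ‖D⁻¹A‖ ≤ 1/4 and ‖A D⁻¹‖ ≤ 1/4, and set X = DA + AD + A². Then 1 + X D⁻² = D (1 + D⁻¹A)(1 + A D⁻¹) D⁻¹, the series Σ_{n≥1} (−1)^{n+1} (X D⁻²)ⁿ/n converges absolutely in 𝒜 (its sum being denoted log(1 + X D⁻²)), and τ(log(1 + X D⁻²)) = 2 τ(log(1 + A D⁻¹)). (This is equation (tracelog1) in the proof of Theorem 2.4(3).) -/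
/-!
Along the path `t ↦ (1 + t u)(1 + t v)`, the derivative of `τ (log (1 + x))` is
`τ ((1 + x)⁻¹ x')`, and the trace property splits
`τ (((1 + t u)(1 + t v))⁻¹ (u (1 + t v) + (1 + t u) v))` into
`τ ((1 + t u)⁻¹ u) + τ ((1 + t v)⁻¹ v)`. Hence `τ log((1 + u)(1 + v)) = τ log(1 + u) + τ log(1 + v)`
for small `u, v`. With `u = D⁻¹A` and `v = AD⁻¹` one has `1 + XD⁻² = D(1 + u)(1 + v)D⁻¹`;
conjugation does not change the trace, and `τ log(1 + D⁻¹A) = τ log(1 + AD⁻¹)` because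
`τ ((D⁻¹A)ᵏ) = τ ((AD⁻¹)ᵏ)`.
-/

open scoped BigOperators

/-- `log(1+x)` defined by the series `Σ_{n≥1} (-1)^{n+1} xⁿ/n`. -/
noncomputable def log1p {𝒜 : Type*} [NormedRing 𝒜] [NormedAlgebra ℂ 𝒜] (x : 𝒜) : 𝒜 :=
  ∑' n : ℕ, ((-1 : ℂ) ^ n / (n + 1)) • x ^ (n + 1)

section NormedRing

variable {R : Type*} [NormedRing R]

lemma norm_pow_mul_le (x y : R) (n : ℕ) : ‖x ^ n * y‖ ≤ ‖x‖ ^ n * ‖y‖ := by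
  induction n with
  | zero => simp
  | succ n ih =>
    calc ‖x ^ (n + 1) * y‖ = ‖x * (x ^ n * y)‖ := by rw [pow_succ', mul_assoc]
      _ ≤ ‖x‖ * (‖x‖ ^ n * ‖y‖) := (norm_mul_le _ _).trans (by gcongr)
      _ = ‖x‖ ^ (n + 1) * ‖y‖ := by ring

lemma norm_add_add_mul_le (u v : R) : ‖u + v + u * v‖ ≤ ‖u‖ + ‖v‖ + ‖u‖ * ‖v‖ :=
  norm_add₃_le.trans (by gcongr; exact norm_mul_le u v)

end NormedRing

lemma norm_logCoeff_le_one (n : ℕ) : ‖(-1 : ℂ) ^ n / (n + 1)‖ ≤ 1 := by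
  rw [norm_div, norm_pow, norm_neg, norm_one, one_pow]
  exact div_le_one_of_le₀ (by norm_cast; simp) (norm_nonneg _)

lemma logCoeff_mul_succ (n : ℕ) : (-1 : ℂ) ^ n / (n + 1) * (n + 1) = (-1) ^ n :=
  div_mul_cancel₀ _ (Nat.cast_add_one_ne_zero n)

section Log1p

open ContinuousLinearMap

variable {𝒜 : Type*} [NormedRing 𝒜] [NormedAlgebra ℂ 𝒜] {τ : 𝒜 →L[ℂ] ℂ}

lemma summable_norm_log1p_series {x : 𝒜} (hx : ‖x‖ < 1) :
    Summable fun n : ℕ => ‖((-1 : ℂ) ^ n / (n + 1)) • x ^ (n + 1)‖ := by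
  refine .of_nonneg_of_le (fun n => norm_nonneg _) (fun n => ?_)
    ((summable_geometric_of_lt_one (norm_nonneg x) hx).mul_left ‖x‖)
  calc ‖((-1 : ℂ) ^ n / (n + 1)) • x ^ (n + 1)‖ ≤ 1 * ‖x ^ n * x‖ := by
        rw [norm_smul, ← pow_succ]; gcongr; exact norm_logCoeff_le_one n
    _ ≤ ‖x‖ * ‖x‖ ^ n := by rw [one_mul, mul_comm]; exact norm_pow_mul_le x x n

@[simp] lemma log1p_zero : log1p (0 : 𝒜) = 0 := by
  simp [log1p]

lemma smul_conj_pow (D : 𝒜ˣ) (x : 𝒜) (c : ℂ) (n : ℕ) :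
    c • (D * x * ↑D⁻¹) ^ n = D * (c • x ^ n) * ↑D⁻¹ := by
  rw [Units.conj_pow, mul_smul_comm, smul_mul_assoc]

lemma summable_norm_log1p_series_conj (D : 𝒜ˣ) {x : 𝒜} (hx : ‖x‖ < 1) :
    Summable fun n : ℕ => ‖((-1 : ℂ) ^ n / (n + 1)) • (D * x * ↑D⁻¹) ^ (n + 1)‖ := by
  refine .of_nonneg_of_le (fun n => norm_nonneg _) (fun n => ?_)
    (((summable_norm_log1p_series hx).mul_left ‖(D : 𝒜)‖).mul_right ‖(↑D⁻¹ : 𝒜)‖)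
  rw [smul_conj_pow]
  exact (norm_mul_le _ _).trans (by gcongr; exact norm_mul_le _ _)

lemma trace_conj (htr : ∀ x y : 𝒜, τ (x * y) = τ (y * x)) (D : 𝒜ˣ) (y : 𝒜) :
    τ (D * y * ↑D⁻¹) = τ y := by
  rw [htr, ← mul_assoc, Units.inv_mul, one_mul]

lemma trace_pow_mul_comm (htr : ∀ x y : 𝒜, τ (x * y) = τ (y * x)) (a b : 𝒜) (n : ℕ) :
    τ ((a * b) ^ (n + 1)) = τ ((b * a) ^ (n + 1)) := by
  rw [pow_succ, ← mul_assoc, mul_pow_mul, mul_assoc, htr, mul_assoc, ← pow_succ]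

lemma trace_units_inverse_mul_add_mul (htr : ∀ x y : 𝒜, τ (x * y) = τ (y * x))
    (a b : 𝒜ˣ) (u v : 𝒜) :
    τ (↑(a * b)⁻¹ * (u * b + a * v)) = τ (↑a⁻¹ * u) + τ (↑b⁻¹ * v) := by
  rw [mul_inv_rev, Units.val_mul, mul_add, map_add]
  congr 1
  · rw [← mul_assoc, htr]
    simp only [← mul_assoc, Units.mul_inv, one_mul]
  · rw [mul_assoc, Units.inv_mul_cancel_left]

lemma hasFDerivAt_trace_pow (htr : ∀ x y : 𝒜, τ (x * y) = τ (y * x)) (x : 𝒜) (n : ℕ) :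
    HasFDerivAt (fun y : 𝒜 => τ (y ^ (n + 1))) ((n + 1 : ℂ) • τ.comp (mul ℂ 𝒜 (x ^ n))) x := by
  refine (τ.hasFDerivAt.comp x (hasFDerivAt_pow' (n + 1))).congr_fderiv ?_
  ext h
  simp only [MulOpposite.op_pow, Nat.pred_eq_sub_one, add_tsub_cancel_right, comp_apply,
    sum_apply, smul_apply, id_apply, smul_eq_mul, MulOpposite.smul_eq_mul_unop,
    MulOpposite.unop_pow, MulOpposite.unop_op, map_sum, mul_apply']
  have hterm : ∀ i ∈ Finset.range (n + 1), τ (x ^ (n - i) * h * x ^ i) = τ (x ^ n * h) := by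
    intro i hi
    rw [htr, ← mul_assoc, ← pow_add, Nat.add_sub_cancel' (Finset.mem_range_succ_iff.mp hi)]
  rw [Finset.sum_congr rfl hterm, Finset.sum_const, Finset.card_range, nsmul_eq_mul]
  push_cast
  ring

variable [CompleteSpace 𝒜]

lemma log1p_conj (D : 𝒜ˣ) {x : 𝒜} (hx : ‖x‖ < 1) :
    log1p (D * x * ↑D⁻¹) = D * log1p x * ↑D⁻¹ := by
  have hs := (summable_norm_log1p_series hx).of_norm
  simp only [log1p, smul_conj_pow, hs.tsum_mul_left, (hs.mul_left _).tsum_mul_right]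

lemma map_log1p (τ : 𝒜 →L[ℂ] ℂ) {x : 𝒜} (hx : ‖x‖ < 1) :
    τ (log1p x) = ∑' n : ℕ, (-1 : ℂ) ^ n / (n + 1) * τ (x ^ (n + 1)) := by
  simp only [log1p, τ.map_tsum (summable_norm_log1p_series hx).of_norm, map_smul, smul_eq_mul]

lemma trace_log1p_mul_comm (htr : ∀ x y : 𝒜, τ (x * y) = τ (y * x)) {a b : 𝒜}
    (hab : ‖a * b‖ < 1) (hba : ‖b * a‖ < 1) :
    τ (log1p (a * b)) = τ (log1p (b * a)) := by
  simp only [map_log1p τ hab, map_log1p τ hba, trace_pow_mul_comm htr a b]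

lemma hasFDerivAt_trace_log1p (htr : ∀ x y : 𝒜, τ (x * y) = τ (y * x)) {x : 𝒜} (hx : ‖x‖ < 1) :
    HasFDerivAt (fun y : 𝒜 => τ (log1p y)) (τ.comp (mul ℂ 𝒜 (Ring.inverse (1 + x)))) x := by
  obtain ⟨r, hxr, hr1⟩ := exists_between hx
  have hr0 : 0 ≤ r := (norm_nonneg x).trans hxr.le
  -- `T z = τ (z * ·)`
  let T : 𝒜 →L[ℂ] 𝒜 →L[ℂ] ℂ := compL ℂ 𝒜 𝒜 ℂ τ ∘L mul ℂ 𝒜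
  have hderiv : ∀ (n : ℕ), ∀ y ∈ Metric.ball (0 : 𝒜) r,
      HasFDerivAt (fun z => (-1 : ℂ) ^ n / (n + 1) * τ (z ^ (n + 1))) (T ((-y) ^ n)) y := by
    intro n y _
    refine ((hasFDerivAt_trace_pow htr y n).const_mul _).congr_fderiv ?_
    ext h
    simp only [smul_apply, comp_apply, mul_apply', smul_eq_mul, compL_apply, T]
    rw [← mul_assoc, logCoeff_mul_succ, ← neg_one_smul ℂ y, smul_pow, smul_mul_assoc, map_smul,
      smul_eq_mul]
  have hbound : ∀ (n : ℕ), ∀ y ∈ Metric.ball (0 : 𝒜) r, ‖T ((-y) ^ n)‖ ≤ ‖τ‖ * r ^ n := by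
    intro n y hy
    refine opNorm_le_bound _ (by positivity) fun h => ?_
    calc ‖τ ((-y) ^ n * h)‖ ≤ ‖τ‖ * (‖-y‖ ^ n * ‖h‖) :=
          (τ.le_opNorm _).trans (by gcongr; exact norm_pow_mul_le _ _ n)
      _ ≤ ‖τ‖ * r ^ n * ‖h‖ := by
          rw [norm_neg, ← mul_assoc]; gcongr; exact (mem_ball_zero_iff.mp hy).le
  have hgeom : ∑' n : ℕ, T ((-x) ^ n) = τ.comp (mul ℂ 𝒜 (Ring.inverse (1 + x))) := by
    rw [((hasSum_geom_series_inverse (-x) (by rwa [norm_neg])).mapL T).tsum_eq, sub_neg_eq_add]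
    rfl
  have hx_mem : x ∈ Metric.ball (0 : 𝒜) r := mem_ball_zero_iff.mpr hxr
  rw [← hgeom]
  refine (hasFDerivAt_tsum_of_isPreconnected
    ((summable_geometric_of_lt_one hr0 hr1).mul_left ‖τ‖) Metric.isOpen_ball
    (convex_ball _ _).isPreconnected hderiv hbound (Metric.mem_ball_self ((norm_nonneg x).trans_lt hxr))
    (by simp) hx_mem).congr_of_eventuallyEq ?_
  filter_upwards [Metric.isOpen_ball.mem_nhds hx_mem] with y hy
  exact map_log1p τ ((mem_ball_zero_iff.mp hy).trans hr1)

lemma HasDerivAt.trace_log1p (htr : ∀ x y : 𝒜, τ (x * y) = τ (y * x))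
    {p : ℝ → 𝒜} {p' : 𝒜} {t : ℝ} (hp : HasDerivAt p p' t) (ht : ‖p t‖ < 1) :
    HasDerivAt (fun s => τ (log1p (p s))) (τ (Ring.inverse (1 + p t) * p')) t :=
  ((hasFDerivAt_trace_log1p htr ht).restrictScalars ℝ).comp_hasDerivAt t hp

lemma trace_log1p_add_add_mul (htr : ∀ x y : 𝒜, τ (x * y) = τ (y * x)) {u v : 𝒜}
    (huv : ‖u‖ + ‖v‖ + ‖u‖ * ‖v‖ < 1) :
    τ (log1p (u + v + u * v)) = τ (log1p u) + τ (log1p v) := by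
  have hu : ‖u‖ < 1 := by nlinarith [norm_nonneg u, norm_nonneg v]
  have hv : ‖v‖ < 1 := by nlinarith [norm_nonneg u, norm_nonneg v]
  have hexpand : ∀ a b : 𝒜, (1 + a) * (1 + b) - 1 = a + b + a * b := fun a b => by noncomm_ring
  let F : ℝ → ℂ := fun t =>
    τ (log1p ((1 + t • u) * (1 + t • v) - 1)) - τ (log1p (t • u)) - τ (log1p (t • v))
  have hF' : ∀ t ∈ Set.Icc (0 : ℝ) 1, HasDerivAt F 0 t := by
    intro t ht
    have hsmul : ∀ w : 𝒜, ‖t • w‖ ≤ ‖w‖ := fun w => by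
      rw [norm_smul, Real.norm_of_nonneg ht.1]
      exact mul_le_of_le_one_left (norm_nonneg w) ht.2
    have hpath : ‖(1 + t • u) * (1 + t • v) - 1‖ < 1 := by
      rw [hexpand]
      refine (norm_add_add_mul_le _ _).trans_lt (lt_of_le_of_lt ?_ huv)
      gcongr <;> exact hsmul _
    have htu : ‖t • u‖ < 1 := (hsmul u).trans_lt hu
    have htv : ‖t • v‖ < 1 := (hsmul v).trans_lt hv
    obtain ⟨a, ha⟩ := isUnit_one_sub_of_norm_lt_one (x := -(t • u)) (by rwa [norm_neg])
    obtain ⟨b, hb⟩ := isUnit_one_sub_of_norm_lt_one (x := -(t • v)) (by rwa [norm_neg])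
    rw [sub_neg_eq_add] at ha hb
    have hdu : HasDerivAt (fun s : ℝ => s • u) u t := by
      simpa using (hasDerivAt_id t).smul_const u
    have hdv : HasDerivAt (fun s : ℝ => s • v) v t := by
      simpa using (hasDerivAt_id t).smul_const v
    have hprod := (((hdu.const_add 1).fun_mul (hdv.const_add 1)).sub_const 1).trace_log1p htr hpath
    refine ((hprod.sub (hdu.trace_log1p htr htu)).sub (hdv.trace_log1p htr htv)).congr_deriv ?_
    rw [add_sub_cancel, ← ha, ← hb, ← Units.val_mul, Ring.inverse_unit, Ring.inverse_unit,
      Ring.inverse_unit, trace_units_inverse_mul_add_mul htr]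
    ring
  have hconst := constant_of_has_deriv_right_zero
    (fun t ht => (hF' t ht).continuousAt.continuousWithinAt)
    (fun t ht => (hF' t (Set.Ico_subset_Icc_self ht)).hasDerivWithinAt) 1
    (Set.right_mem_Icc.2 zero_le_one)
  simpa [F, hexpand, sub_eq_zero, sub_eq_iff_eq_add'] using hconst

end Log1p

/-- for `D` invertible, `‖D⁻¹A‖ ≤ 1/4`, `‖AD⁻¹‖ ≤ 1/4`, and
`X = DA + AD + A²`: one has `1 + XD⁻² = D(1 + D⁻¹A)(1 + AD⁻¹)D⁻¹`, the logarithm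
series of `1 + XD⁻²` converges absolutely, and
`τ(log(1 + XD⁻²)) = 2 τ(log(1 + AD⁻¹))`. -/
theorem stmt13 {𝒜 : Type*} [NormedRing 𝒜] [NormedAlgebra ℂ 𝒜] [CompleteSpace 𝒜]
    (τ : 𝒜 →L[ℂ] ℂ) (htr : ∀ x y : 𝒜, τ (x * y) = τ (y * x))
    (D Dinv : 𝒜) (hD : D * Dinv = 1) (hDinv : Dinv * D = 1)
    (A : 𝒜) (h1 : ‖Dinv * A‖ ≤ 1 / 4) (h2 : ‖A * Dinv‖ ≤ 1 / 4) :
    (1 : 𝒜) + (D * A + A * D + A * A) * (Dinv * Dinv) =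
        D * (1 + Dinv * A) * (1 + A * Dinv) * Dinv ∧
      Summable (fun n : ℕ =>
        ‖((-1 : ℂ) ^ n / (n + 1)) •
          ((D * A + A * D + A * A) * (Dinv * Dinv)) ^ (n + 1)‖) ∧
      τ (log1p ((D * A + A * D + A * A) * (Dinv * Dinv))) =
        2 * τ (log1p (A * Dinv)) := by
  let U : 𝒜ˣ := ⟨D, Dinv, hD, hDinv⟩
  set u := Dinv * A
  set v := A * Dinv
  have hX : (D * A + A * D + A * A) * (Dinv * Dinv) = U * (u + v + u * v) * ↑U⁻¹ := by
    simp only [U, Units.val_mk, Units.inv_mk, u, v, mul_add, add_mul, mul_assoc]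
    simp only [← mul_assoc D Dinv, hD, one_mul]
    abel
  have huv : ‖u‖ + ‖v‖ + ‖u‖ * ‖v‖ < 1 := by nlinarith [norm_nonneg u, norm_nonneg v]
  have hw : ‖u + v + u * v‖ < 1 := (norm_add_add_mul_le u v).trans_lt huv
  refine ⟨?_, ?_, ?_⟩
  · rw [hX]
    simp only [U, Units.val_mk, Units.inv_mk, u, v, mul_add, add_mul, mul_one, mul_assoc]
    simp only [← mul_assoc D Dinv, hD, one_mul]
    abel
  · rw [hX]
    exact summable_norm_log1p_series_conj U hw
  · rw [hX, log1p_conj U hw, trace_conj htr, trace_log1p_add_add_mul htr huv,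
      trace_log1p_mul_comm htr (by linarith) (by linarith), two_mul]
end

section
/- For all a, b ∈ 𝒜 one has exp(a+b)·exp(−a) = Σ_{n=0}^{∞} ∫_{0 ≤ t₁ ≤ ⋯ ≤ tₙ ≤ 1} B(t₁) B(t₂) ⋯ B(tₙ) dt₁⋯dtₙ, where B(t) = exp(ta)·b·exp(−ta), the n = 0 term is 1, each integral is a Bochner integral over the n-simplex, and the series converges absolutely in norm. (This is the expansional formula (expansional) used in the proof of Theorem 2.4.) -/
/-!
Put `B(u) = exp(u a) b exp(-u a)`. The function `F(s) = exp(s(a+b)) exp(-s a)` solves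
`F' = F B` with `F(0) = 1`, hence `F(s) = 1 + ∫₀ˢ F B`. Iterating this integral equation
(Picard iteration) produces the Dyson terms `H₀ = 1`, `Hₙ₊₁(s) = ∫₀ˢ Hₙ(u) B(u) du`, with
`‖Hₙ(s)‖ ≤ ‖1‖ (M s)ⁿ / n!` and `‖F(s) - ∑_{n<N} Hₙ(s)‖ ≤ C (M s)ᴺ / N!` for bounds `M` of `B`
and `C` of `F` on `[0, s]`; so the series converges absolutely to `F(s)`. Finally, Fubini,
splitting off the largest coordinate `tₙ₊₁ = u` of a point of the ordered simplex, identifies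
`Hₙ(s)` with the integral of `B(t₁) ⋯ B(tₙ)` over `0 ≤ t₁ ≤ ⋯ ≤ tₙ ≤ s`.
-/

open MeasureTheory Set Filter Topology
open scoped Nat

section DysonSeries

variable {𝔸 : Type*} [NormedRing 𝔸] [NormedAlgebra ℝ 𝔸]

noncomputable def dysonTerm (B : ℝ → 𝔸) : ℕ → ℝ → 𝔸
  | 0, _ => 1
  | n + 1, s => ∫ u in (0 : ℝ)..s, dysonTerm B n u * B u

variable {B : ℝ → 𝔸}

theorem continuous_dysonTerm (hB : Continuous B) (n : ℕ) : Continuous (dysonTerm B n) := by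
  induction n with
  | zero => exact continuous_const
  | succ n ih =>
    exact intervalIntegral.continuous_primitive (fun _ _ => (ih.mul hB).intervalIntegrable _ _) 0

theorem norm_integral_mul_le_of_norm_le {g : ℝ → 𝔸} {c M s : ℝ} {n : ℕ} (hs : 0 ≤ s)
    (hg : ∀ u ∈ Icc 0 s, ‖g u‖ ≤ c * (M * u) ^ n / n !)
    (hB : ∀ u ∈ Icc 0 s, ‖B u‖ ≤ M) :
    ‖∫ u in (0 : ℝ)..s, g u * B u‖ ≤ c * (M * s) ^ (n + 1) / (n + 1)! := by
  calc ‖∫ u in (0 : ℝ)..s, g u * B u‖ ≤ ∫ u in (0 : ℝ)..s, c * M ^ (n + 1) / n ! * u ^ n := by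
        refine intervalIntegral.norm_integral_le_of_norm_le hs (ae_of_all _ fun u hu => ?_)
          ((continuous_const.mul (continuous_pow n)).intervalIntegrable _ _)
        have hu : u ∈ Icc 0 s := Ioc_subset_Icc_self hu
        calc ‖g u * B u‖ ≤ ‖g u‖ * ‖B u‖ := norm_mul_le _ _
          _ ≤ c * (M * u) ^ n / n ! * M :=
              mul_le_mul (hg u hu) (hB u hu) (norm_nonneg _) ((norm_nonneg _).trans (hg u hu))
          _ = c * M ^ (n + 1) / n ! * u ^ n := by ring
    _ = c * (M * s) ^ (n + 1) / (n + 1)! := by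
        rw [intervalIntegral.integral_const_mul, integral_pow, Nat.factorial_succ]
        push_cast
        field_simp
        ring

theorem norm_dysonTerm_le {M : ℝ} (n : ℕ) {s : ℝ} (hs : 0 ≤ s)
    (hB : ∀ u ∈ Icc 0 s, ‖B u‖ ≤ M) :
    ‖dysonTerm B n s‖ ≤ ‖(1 : 𝔸)‖ * (M * s) ^ n / n ! := by
  induction n generalizing s with
  | zero => simp [dysonTerm]
  | succ n ih =>
    refine norm_integral_mul_le_of_norm_le hs (fun u hu => ih hu.1 fun v hv => ?_) hB
    exact hB v ⟨hv.1, hv.2.trans hu.2⟩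

theorem summable_norm_dysonTerm (hB : Continuous B) {s : ℝ} (hs : 0 ≤ s) :
    Summable fun n => ‖dysonTerm B n s‖ := by
  obtain ⟨M, hM⟩ := isCompact_Icc.exists_bound_of_continuousOn (hB.continuousOn (s := Icc 0 s))
  refine .of_nonneg_of_le (fun n => norm_nonneg _) (fun n => ?_)
    ((Real.summable_pow_div_factorial (M * s)).mul_left ‖(1 : 𝔸)‖)
  rw [← mul_div_assoc]
  exact norm_dysonTerm_le n hs hM

theorem sub_sum_range_succ_dysonTerm {F : ℝ → 𝔸} (hB : Continuous B) (hF : Continuous F)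
    (hFB : ∀ s, F s = 1 + ∫ u in (0 : ℝ)..s, F u * B u) (N : ℕ) (s : ℝ) :
    F s - ∑ n ∈ Finset.range (N + 1), dysonTerm B n s =
      ∫ u in (0 : ℝ)..s, (F u - ∑ n ∈ Finset.range N, dysonTerm B n u) * B u := by
  have hint : ∀ n, Continuous fun u => dysonTerm B n u * B u :=
    fun n => (continuous_dysonTerm hB n).mul hB
  simp only [sub_mul, Finset.sum_mul]
  rw [intervalIntegral.integral_sub (f := fun u => F u * B u) ((hF.mul hB).intervalIntegrable _ _)
    ((continuous_finsetSum _ fun n _ => hint n).intervalIntegrable _ _),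
    intervalIntegral.integral_finsetSum fun n _ => (hint n).intervalIntegrable _ _,
    Finset.sum_range_succ', hFB s]
  simp only [dysonTerm]
  abel

theorem norm_sub_sum_range_dysonTerm_le {F : ℝ → 𝔸} (hB : Continuous B) (hF : Continuous F)
    (hFB : ∀ s, F s = 1 + ∫ u in (0 : ℝ)..s, F u * B u) {C M s : ℝ} (hs : 0 ≤ s)
    (hF_le : ∀ u ∈ Icc 0 s, ‖F u‖ ≤ C) (hB_le : ∀ u ∈ Icc 0 s, ‖B u‖ ≤ M) (N : ℕ) :
    ‖F s - ∑ n ∈ Finset.range N, dysonTerm B n s‖ ≤ C * (M * s) ^ N / N ! := by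
  induction N generalizing s with
  | zero => simpa using hF_le s ⟨hs, le_rfl⟩
  | succ N ih =>
    rw [sub_sum_range_succ_dysonTerm hB hF hFB]
    refine norm_integral_mul_le_of_norm_le hs (fun u hu => ih hu.1 ?_ ?_) hB_le
    · exact fun v hv => hF_le v ⟨hv.1, hv.2.trans hu.2⟩
    · exact fun v hv => hB_le v ⟨hv.1, hv.2.trans hu.2⟩

theorem hasSum_dysonTerm [CompleteSpace 𝔸] {F : ℝ → 𝔸} (hB : Continuous B)
    (hF : ∀ s, HasDerivAt F (F s * B s) s)
    (hF₀ : F 0 = 1) {s : ℝ} (hs : 0 ≤ s) : HasSum (fun n => dysonTerm B n s) (F s) := by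
  have hFc : Continuous F := continuous_iff_continuousAt.2 fun s => (hF s).continuousAt
  have hFB : ∀ s, F s = 1 + ∫ u in (0 : ℝ)..s, F u * B u := fun s => by
    rw [intervalIntegral.integral_eq_sub_of_hasDerivAt (fun u _ => hF u)
      ((hFc.mul hB).intervalIntegrable _ _), hF₀]
    abel
  obtain ⟨M, hM⟩ := isCompact_Icc.exists_bound_of_continuousOn (hB.continuousOn (s := Icc 0 s))
  obtain ⟨C, hC⟩ := isCompact_Icc.exists_bound_of_continuousOn (hFc.continuousOn (s := Icc 0 s))
  rw [hasSum_iff_tendsto_nat_of_summable_norm (summable_norm_dysonTerm hB hs),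
    tendsto_iff_norm_sub_tendsto_zero]
  have hlim := (FloorSemiring.tendsto_pow_div_factorial_atTop (M * s)).const_mul C
  rw [mul_zero] at hlim
  refine squeeze_zero (fun _ => norm_nonneg _) (fun N => ?_) hlim
  rw [norm_sub_rev, ← mul_div_assoc]
  exact norm_sub_sum_range_dysonTerm_le hB hFc hFB hs hC hM N

end DysonSeries

def orderedSimplex (n : ℕ) (s : ℝ) : Set (Fin n → ℝ) :=
  {t | Monotone t ∧ ∀ i, t i ∈ Icc 0 s}

theorem isCompact_orderedSimplex (n : ℕ) (s : ℝ) : IsCompact (orderedSimplex n s) := by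
  have h : orderedSimplex n s = {t | Monotone t} ∩ ⋂ i, (fun t => t i) ⁻¹' Icc 0 s := by
    ext t
    simp [orderedSimplex]
  refine (isCompact_univ_pi fun _ => isCompact_Icc).of_isClosed_subset ?_ fun t ht =>
    mem_univ_pi.2 ht.2
  rw [h]
  exact isClosed_monotone.inter
    (isClosed_iInter fun i => isClosed_Icc.preimage (continuous_apply i))

theorem Fin.monotone_snoc_iff {α : Type*} [Preorder α] {n : ℕ} {t : Fin n → α} {u : α} :
    Monotone (Fin.snoc t u : Fin (n + 1) → α) ↔ Monotone t ∧ ∀ i, t i ≤ u := by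
  constructor
  · intro h
    refine ⟨fun i j hij => ?_, fun i => ?_⟩
    · simpa using h (Fin.castSucc_le_castSucc_iff.2 hij)
    · simpa using h (Fin.castSucc_lt_last i).le
  · rintro ⟨ht, hu⟩ i j hij
    induction j using Fin.lastCases with
    | last => induction i using Fin.lastCases <;> simp [hu]
    | cast j =>
      induction i using Fin.lastCases with
      | last => exact absurd hij (Fin.castSucc_lt_last j).not_ge
      | cast i => simpa using ht (Fin.castSucc_le_castSucc_iff.1 hij)

theorem snoc_mem_orderedSimplex_iff {n : ℕ} {s u : ℝ} {t : Fin n → ℝ} :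
    Fin.snoc t u ∈ orderedSimplex (n + 1) s ↔ u ∈ Icc 0 s ∧ t ∈ orderedSimplex n u := by
  simp only [orderedSimplex, mem_ofPred_eq, Fin.monotone_snoc_iff, Fin.forall_fin_succ',
    Fin.snoc_castSucc, Fin.snoc_last, mem_Icc]
  constructor
  · rintro ⟨⟨ht, htu⟩, hts, hu⟩
    exact ⟨hu, ht, fun i => ⟨(hts i).1, htu i⟩⟩
  · rintro ⟨hu, ht, htu⟩
    exact ⟨⟨ht, fun i => (htu i).2⟩, fun i => ⟨(htu i).1, (htu i).2.trans hu.2⟩, hu⟩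

theorem setIntegral_orderedSimplex_succ {E : Type*} [NormedAddCommGroup E] [NormedSpace ℝ E]
    {n : ℕ} {s : ℝ} {f : (Fin (n + 1) → ℝ) → E} (hf : IntegrableOn f (orderedSimplex (n + 1) s)) :
    ∫ t in orderedSimplex (n + 1) s, f t =
      ∫ u in Icc 0 s, ∫ t in orderedSimplex n u, f (Fin.snoc t u) := by
  set e := (MeasurableEquiv.piFinSuccAbove (fun _ : Fin (n + 1) => ℝ) (Fin.last n)).symm
  have he : MeasurePreserving e (volume.prod volume) volume := by
    rw [← Measure.volume_eq_prod]
    exact (volume_preserving_piFinSuccAbove _ _).symm _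
  have hmeas := (isCompact_orderedSimplex (n + 1) s).isClosed.measurableSet
  have he_apply : ∀ u t, e (u, t) = Fin.snoc t u := fun u t => by
    simp [e, MeasurableEquiv.piFinSuccAbove_symm_apply, Fin.insertNthEquiv, Fin.insertNth_last']
  have hind : ∀ u t, (orderedSimplex (n + 1) s).indicator f (e (u, t)) =
      (Icc 0 s).indicator (fun u => (orderedSimplex n u).indicator (f <| Fin.snoc · u) t) u := by
    intro u t
    rw [he_apply]
    by_cases h : u ∈ Icc 0 s ∧ t ∈ orderedSimplex n u
    · rw [indicator_of_mem (snoc_mem_orderedSimplex_iff.2 h), indicator_of_mem h.1,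
        indicator_of_mem h.2]
    · rw [indicator_of_notMem (mt snoc_mem_orderedSimplex_iff.1 h)]
      by_cases hu : u ∈ Icc 0 s
      · rw [indicator_of_mem hu, indicator_of_notMem fun ht => h ⟨hu, ht⟩]
      · rw [indicator_of_notMem hu]
  rw [← integral_indicator hmeas, ← he.integral_comp e.measurableEmbedding, integral_prod,
    ← integral_indicator measurableSet_Icc]
  · refine integral_congr_ae (ae_of_all _ fun u => ?_)
    simp only [hind]
    by_cases hu : u ∈ Icc 0 s
    · simp only [indicator_of_mem hu]
      exact integral_indicator (isCompact_orderedSimplex n u).isClosed.measurableSet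
    · simp [indicator_of_notMem hu]
  · exact (he.integrable_comp_emb e.measurableEmbedding).2 ((integrable_indicator_iff hmeas).2 hf)

theorem setIntegral_orderedSimplex_prod_eq_dysonTerm {𝔸 : Type*} [NormedRing 𝔸]
    [NormedAlgebra ℝ 𝔸] [CompleteSpace 𝔸] {B : ℝ → 𝔸} (hB : Continuous B) (n : ℕ) {s : ℝ}
    (hs : 0 ≤ s) :
    ∫ t in orderedSimplex n s, (List.ofFn fun i => B (t i)).prod = dysonTerm B n s := by
  have hcont : ∀ m, Continuous fun t : Fin m → ℝ => (List.ofFn fun i => B (t i)).prod := by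
    intro m
    simp only [List.ofFn_eq_map]
    exact continuous_list_prod _ fun i _ => hB.comp (continuous_apply i)
  have hint : ∀ m s, IntegrableOn (fun t : Fin m → ℝ => (List.ofFn fun i => B (t i)).prod)
      (orderedSimplex m s) := fun m s =>
    (hcont m).continuousOn.integrableOn_compact (isCompact_orderedSimplex m s)
  induction n generalizing s with
  | zero => simp [dysonTerm, orderedSimplex, Subsingleton.monotone, measureReal_def, volume_pi]
  | succ n ih =>
    rw [setIntegral_orderedSimplex_succ (hint _ _), dysonTerm, intervalIntegral.integral_of_le hs,
      ← integral_Icc_eq_integral_Ioc]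
    refine setIntegral_congr_fun measurableSet_Icc fun u hu => ?_
    simp only [List.ofFn_succ', List.prod_concat, Fin.snoc_castSucc, Fin.snoc_last]
    rw [integral_mul_const_of_integrable (hint n u), ih hu.1]

section Exponential

open NormedSpace

variable {𝔸 : Type*} [NormedRing 𝔸] [NormedAlgebra ℝ 𝔸] [CompleteSpace 𝔸]

theorem exp_smul_neg_mul_exp_smul (a : 𝔸) (s : ℝ) : exp (s • -a) * exp (s • a) = 1 := by
  -- `exp_add_of_commute` is stated for `ℚ`-algebras.
  let _ : NormedAlgebra ℚ 𝔸 := NormedAlgebra.restrictScalars ℚ ℝ 𝔸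
  rw [← exp_add_of_commute ((Commute.refl a).neg_left.smul_left s |>.smul_right s), ← smul_add,
    neg_add_cancel, smul_zero, exp_zero]

theorem continuous_exp_smul_mul_mul_exp_neg_smul (a b : 𝔸) :
    Continuous fun u : ℝ => exp (u • a) * b * exp (-u • a) :=
  have hexp : Continuous fun u : ℝ => exp (u • a) := (differentiable_exp_smul_const ℝ a).continuous
  (hexp.mul continuous_const).mul (hexp.comp continuous_neg)

theorem hasDerivAt_exp_smul_add_mul_exp_smul_neg (a b : 𝔸) (s : ℝ) :
    HasDerivAt (fun u : ℝ => exp (u • (a + b)) * exp (u • -a))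
      (exp (s • (a + b)) * exp (s • -a) * (exp (s • a) * b * exp (-s • a))) s := by
  refine ((hasDerivAt_exp_smul_const (a + b) s).mul
    (hasDerivAt_exp_smul_const (-a) s)).congr_deriv ?_
  have hcomm : Commute (exp (s • -a)) a := ((Commute.refl a).neg_left.smul_left s).exp_left
  rw [neg_smul, ← smul_neg, mul_neg, hcomm.eq]
  calc _ = exp (s • (a + b)) * (b * exp (s • -a)) := by noncomm_ring
    _ = exp (s • (a + b)) * (exp (s • -a) * exp (s • a)) * (b * exp (s • -a)) := by
      rw [exp_smul_neg_mul_exp_smul, mul_one]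
    _ = _ := by noncomm_ring

end Exponential

/-- the expansional formula
`exp(a+b) exp(-a) = Σₙ ∫_{0 ≤ t₁ ≤ ⋯ ≤ tₙ ≤ 1} B(t₁)⋯B(tₙ) dt`,
with `B(t) = exp(ta) b exp(-ta)`; the series converges absolutely in norm. -/
theorem stmt14 {𝒜 : Type*} [NormedRing 𝒜] [NormedAlgebra ℂ 𝒜] [CompleteSpace 𝒜]
    (a b : 𝒜) :
    Summable (fun n : ℕ =>
      ‖∫ t in {t : Fin n → ℝ | Monotone t ∧ ∀ i, t i ∈ Set.Icc (0 : ℝ) 1},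
        (List.ofFn fun i : Fin n =>
          NormedSpace.exp ((t i) • a) * b * NormedSpace.exp (-(t i) • a)).prod‖) ∧
    NormedSpace.exp (a + b) * NormedSpace.exp (-a) =
      ∑' n : ℕ,
        ∫ t in {t : Fin n → ℝ | Monotone t ∧ ∀ i, t i ∈ Set.Icc (0 : ℝ) 1},
          (List.ofFn fun i : Fin n =>
            NormedSpace.exp ((t i) • a) * b * NormedSpace.exp (-(t i) • a)).prod := by
  have hB := continuous_exp_smul_mul_mul_exp_neg_smul a b
  have hterm : ∀ n : ℕ,
      ∫ t in {t : Fin n → ℝ | Monotone t ∧ ∀ i, t i ∈ Set.Icc (0 : ℝ) 1},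
        (List.ofFn fun i : Fin n =>
          NormedSpace.exp ((t i) • a) * b * NormedSpace.exp (-(t i) • a)).prod =
        dysonTerm (fun u : ℝ => NormedSpace.exp (u • a) * b * NormedSpace.exp (-u • a)) n 1 :=
    fun n => setIntegral_orderedSimplex_prod_eq_dysonTerm hB n zero_le_one
  have hsum := hasSum_dysonTerm hB (hasDerivAt_exp_smul_add_mul_exp_smul_neg a b) (by simp)
    zero_le_one
  simp only [one_smul, smul_neg] at hsum
  simp only [hterm]
  exact ⟨summable_norm_dysonTerm hB zero_le_one, hsum.tsum_eq.symm⟩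
end

section
/- For every positive invertible element a of 𝒜, the function λ ↦ (1+λ)⁻¹·1 − (a + λ·1)⁻¹ is Bochner integrable on [0,∞) and ∫₀^∞ ((1+λ)⁻¹·1 − (a + λ·1)⁻¹) dλ = log a. (This is the integral representation Log a = ∫₀^∞ (1/(λ+1) − 1/(λ+a)) dλ applied in the proof of Lemma 2.2.) -/
/-!
For `x > 0`, `(1 + t)⁻¹ - (x + t)⁻¹` is the derivative of `log (1 + t) - log (x + t)`, which
vanishes at infinity, so its integral over `[0, ∞)` is `log x`. The integrand is monotone in `x`,
so on the spectrum of `a`, a compact subset of `(0, ∞)`, it is dominated by its (integrable)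
values at the two ends; hence the integral commutes with the continuous functional calculus,
which sends `x ↦ (x + t)⁻¹` to `Ring.inverse (a + t • 1)`.
-/

open MeasureTheory Set Filter Topology Real

lemma hasDerivAt_log_one_add_sub_log_add {x t : ℝ} (hx : 0 < x) (ht : 0 ≤ t) :
    HasDerivAt (fun s => log (1 + s) - log (x + s)) ((1 + t)⁻¹ - (x + t)⁻¹) t := by
  have h1 : (1 : ℝ) + t ≠ 0 := by positivity
  have h2 : x + t ≠ 0 := by positivity
  simpa using (((hasDerivAt_id t).const_add 1).log h1).fun_sub
    (((hasDerivAt_id t).const_add x).log h2)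

lemma tendsto_log_one_add_sub_log_add (x : ℝ) :
    Tendsto (fun s => log (1 + s) - log (x + s)) atTop (𝓝 0) := by
  have h := (tendsto_log_comp_add_sub_log 1).sub (tendsto_log_comp_add_sub_log x)
  rw [sub_zero] at h
  exact h.congr fun s => by rw [add_comm s, add_comm s]; ring

lemma integrableOn_inv_one_add_sub_inv_add {x : ℝ} (hx : 0 < x) :
    IntegrableOn (fun t => (1 + t)⁻¹ - (x + t)⁻¹) (Ici 0) := by
  rw [integrableOn_Ici_iff_integrableOn_Ioi]
  have hderiv := fun t (ht : t ∈ Ici (0 : ℝ)) => hasDerivAt_log_one_add_sub_log_add hx ht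
  rcases le_total 1 x with h | h
  · refine integrableOn_Ioi_deriv_of_nonneg' hderiv (fun t ht => ?_)
      (tendsto_log_one_add_sub_log_add x)
    have : (0 : ℝ) < t := ht
    exact sub_nonneg.2 (inv_anti₀ (by positivity) (by linarith))
  · refine integrableOn_Ioi_deriv_of_nonpos' hderiv (fun t ht => ?_)
      (tendsto_log_one_add_sub_log_add x)
    have : (0 : ℝ) < t := ht
    exact sub_nonpos.2 (inv_anti₀ (by positivity) (by linarith))

lemma integral_inv_one_add_sub_inv_add {x : ℝ} (hx : 0 < x) :
    ∫ t in Ici (0 : ℝ), ((1 + t)⁻¹ - (x + t)⁻¹) = log x := by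
  rw [integral_Ici_eq_integral_Ioi, integral_Ioi_of_hasDerivAt_of_tendsto'
    (fun t ht => hasDerivAt_log_one_add_sub_log_add hx ht)
    ((integrableOn_inv_one_add_sub_inv_add hx).mono_set Ioi_subset_Ici_self)
    (tendsto_log_one_add_sub_log_add x)]
  simp

lemma abs_inv_one_add_sub_inv_add_le {x y z t : ℝ} (hy : 0 < y) (hyx : y ≤ x) (hxz : x ≤ z)
    (ht : 0 ≤ t) :
    |(1 + t)⁻¹ - (x + t)⁻¹| ≤ |(1 + t)⁻¹ - (y + t)⁻¹| + |(1 + t)⁻¹ - (z + t)⁻¹| := by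
  refine (abs_le_max_abs_abs ?_ ?_).trans
    (max_le_add_of_nonneg (abs_nonneg _) (abs_nonneg _))
  · exact sub_le_sub_left (inv_anti₀ (by linarith) (by linarith)) _
  · exact sub_le_sub_left (inv_anti₀ (by linarith) (by linarith)) _

lemma IsCompact.exists_integrableOn_bound_inv_one_add_sub_inv_add {s : Set ℝ}
    (hs : IsCompact s) (hpos : ∀ x ∈ s, 0 < x) :
    ∃ bound : ℝ → ℝ, IntegrableOn bound (Ici 0) ∧
      ∀ t ∈ Ici (0 : ℝ), ∀ x ∈ s, ‖(1 + t)⁻¹ - (x + t)⁻¹‖ ≤ bound t := by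
  obtain ⟨y, hy, hys⟩ := hs.exists_forall_le' continuousOn_id hpos
  obtain ⟨M, hM⟩ := hs.bddAbove
  set z := max y M
  refine ⟨fun t => |(1 + t)⁻¹ - (y + t)⁻¹| + |(1 + t)⁻¹ - (z + t)⁻¹|,
    (integrableOn_inv_one_add_sub_inv_add hy).abs.add
      (integrableOn_inv_one_add_sub_inv_add (hy.trans_le (le_max_left y M))).abs,
    fun t ht x hx => abs_inv_one_add_sub_inv_add_le hy (hys x hx)
      ((hM hx).trans (le_max_right y M)) ht⟩

lemma continuousOn_uncurry_inv_one_add_sub_inv_add {s : Set ℝ} (hpos : ∀ x ∈ s, 0 < x) :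
    ContinuousOn (Function.uncurry fun t x : ℝ => (1 + t)⁻¹ - (x + t)⁻¹) (Ici 0 ×ˢ s) := by
  refine ContinuousOn.sub ?_ ?_
  · exact (continuous_const.add continuous_fst).continuousOn.inv₀ fun p hp =>
      (add_pos_of_pos_of_nonneg one_pos hp.1).ne'
  · exact (continuous_snd.add continuous_fst).continuousOn.inv₀ fun p hp =>
      (add_pos_of_pos_of_nonneg (hpos _ hp.2) hp.1).ne'

lemma cfc_inv_one_add_sub_inv_add {A : Type*} [Ring A] [StarRing A] [TopologicalSpace A]
    [Algebra ℝ A] [ContinuousFunctionalCalculus ℝ A IsSelfAdjoint] (a : A) {t : ℝ} (ht : 0 ≤ t)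
    (hspec : ∀ x ∈ spectrum ℝ a, 0 < x) (ha : IsSelfAdjoint a := by cfc_tac) :
    cfc (fun x => (1 + t)⁻¹ - (x + t)⁻¹) a =
      (1 + t)⁻¹ • (1 : A) - Ring.inverse (a + t • 1) := by
  have hne : ∀ x ∈ spectrum ℝ a, x + t ≠ 0 := fun x hx =>
    (add_pos_of_pos_of_nonneg (hspec x hx) ht).ne'
  have hcont : ContinuousOn (fun x : ℝ => (x + t)⁻¹) (spectrum ℝ a) :=
    (continuous_id.add continuous_const).continuousOn.inv₀ hne
  rw [cfc_sub _ _ a continuousOn_const hcont, cfc_const _ a, cfc_inv (fun x => x + t) a hne,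
    cfc_add_const t (fun x => x) a, cfc_id' ℝ a, Algebra.algebraMap_eq_smul_one,
    Algebra.algebraMap_eq_smul_one]

section Integral

variable {A : Type*} [NormedRing A] [StarRing A] [NormedAlgebra ℝ A] [CompleteSpace A]
  [ContinuousFunctionalCalculus ℝ A IsSelfAdjoint]

lemma integrableOn_cfc_inv_one_add_sub_inv_add (a : A) (hspec : ∀ x ∈ spectrum ℝ a, 0 < x)
    (ha : IsSelfAdjoint a := by cfc_tac) :
    IntegrableOn (fun t : ℝ => cfc (fun x => (1 + t)⁻¹ - (x + t)⁻¹) a) (Ici 0) := by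
  obtain ⟨bound, hbound, hle⟩ :=
    (spectrum.isCompact a).exists_integrableOn_bound_inv_one_add_sub_inv_add hspec
  exact integrableOn_cfc measurableSet_Ici _ bound a
    (continuousOn_uncurry_inv_one_add_sub_inv_add hspec)
    (ae_restrict_of_forall_mem measurableSet_Ici hle) hbound.hasFiniteIntegral

lemma setIntegral_cfc_inv_one_add_sub_inv_add (a : A) (hspec : ∀ x ∈ spectrum ℝ a, 0 < x)
    (ha : IsSelfAdjoint a := by cfc_tac) :
    ∫ t in Ici (0 : ℝ), cfc (fun x => (1 + t)⁻¹ - (x + t)⁻¹) a = cfc log a := by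
  obtain ⟨bound, hbound, hle⟩ :=
    (spectrum.isCompact a).exists_integrableOn_bound_inv_one_add_sub_inv_add hspec
  rw [← cfc_setIntegral measurableSet_Ici _ bound a
    (continuousOn_uncurry_inv_one_add_sub_inv_add hspec)
    (ae_restrict_of_forall_mem measurableSet_Ici hle) hbound.hasFiniteIntegral]
  exact cfc_congr fun x hx => integral_inv_one_add_sub_inv_add (hspec x hx)

end Integral

/-- in a unital C*-algebra, for `a` positive and invertible,
`λ ↦ (1+λ)⁻¹·1 - (a + λ·1)⁻¹` is Bochner integrable on `[0,∞)` and
`∫₀^∞ ((1+λ)⁻¹·1 - (a + λ·1)⁻¹) dλ = log a` (continuous functional calculus). -/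
theorem stmt15 {𝒜 : Type*} [CStarAlgebra 𝒜] [PartialOrder 𝒜] [StarOrderedRing 𝒜]
    (a : 𝒜) (ha : 0 ≤ a) (ha' : IsUnit a) :
    IntegrableOn
      (fun lam : ℝ => (1 + lam)⁻¹ • (1 : 𝒜) - Ring.inverse (a + lam • 1))
      (Set.Ici (0 : ℝ)) volume ∧
    ∫ lam in Set.Ici (0 : ℝ),
        ((1 + lam)⁻¹ • (1 : 𝒜) - Ring.inverse (a + lam • 1)) =
      cfc Real.log a := by
  have hsa : IsSelfAdjoint a := .of_nonneg ha
  have hspec : ∀ x ∈ spectrum ℝ a, 0 < x := fun _ hx =>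
    (ha'.isStrictlyPositive ha).spectrum_pos hx
  have hcfc : EqOn (fun t : ℝ => cfc (fun x => (1 + t)⁻¹ - (x + t)⁻¹) a)
      (fun t => (1 + t)⁻¹ • (1 : 𝒜) - Ring.inverse (a + t • 1)) (Ici 0) :=
    fun t ht => cfc_inv_one_add_sub_inv_add a ht hspec
  refine ⟨(integrableOn_cfc_inv_one_add_sub_inv_add a hspec).congr_fun hcfc measurableSet_Ici,
    ?_⟩
  rw [← setIntegral_congr_fun measurableSet_Ici hcfc,
    setIntegral_cfc_inv_one_add_sub_inv_add a hspec]
end
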